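/- arXiv:0903.4650 — 8 statements merged into one kernel-verified Lean document; each statement's English description precedes it below -/
import Mathlib

section
/- Let G be a finite abelian group, R a commutative ring with no nontrivial idempotents, and φ ∈ Z²(G,U(R)) with associated pairing f_φ. Define the φ-regular subgroup G_reg = {σ ∈ G : f_φ(σ,τ) = 1 for all τ ∈ G}. Then an element x = Σ_σ r_σ u_σ of the twisted group ring RG^φ is central if and only if r_σ = 0 for all σ ∉ G_reg; consequently Z(RG^φ) = ⊕_{σ ∈ G_reg} R u_σ. -/
theorem stmt4 (R : Type*) [CommRing R] [IsDomain R]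
    (G : Type*) [CommGroup G] [Fintype G]
    (φ : G → G → Rˣ)
    (hφ : ∀ a b c : G, φ b c * φ a (b * c) = φ a b * φ (a * b) c)
    (hφ1 : φ 1 1 = 1)
    (A : Type*) [Ring A] [Algebra R A] (u : Module.Basis G R A)
    (hmul : ∀ σ τ : G, u σ * u τ = ((φ σ τ : Rˣ) : R) • u (σ * τ))
    (Greg : Set G) (hGreg : Greg = {σ : G | ∀ τ : G, φ σ τ * (φ τ σ)⁻¹ = 1}) :
    (∀ x : A, x ∈ Subring.center A ↔ ∀ σ : G, σ ∉ Greg → u.repr x σ = 0) ∧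
    (Subring.center A : Set A) = (Submodule.span R (u '' Greg) : Set A) := by
  classical
  -- key computation of coefficients of x * u τ and u τ * x
  have key1 : ∀ (x : A) (σ τ : G),
      u.repr (x * u τ) (σ * τ) = u.repr x σ * φ σ τ := by
    intro x σ τ
    conv_lhs => rw [← u.sum_repr x]
    rw [Finset.sum_mul]
    simp only [smul_mul_assoc, hmul, smul_smul]
    rw [map_sum, Finset.sum_apply']
    simp only [map_smul, u.repr_self, Finsupp.smul_single, smul_eq_mul,
      Finsupp.single_apply, mul_one]
    have : ∀ i : G, (i * τ = σ * τ) = (i = σ) := by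
      intro i; simp [mul_left_inj]
    simp only [this]
    rw [Finset.sum_ite_eq' Finset.univ σ fun i => u.repr x i * (φ i τ : R)]
    simp
  have key2 : ∀ (x : A) (σ τ : G),
      u.repr (u τ * x) (σ * τ) = u.repr x σ * φ τ σ := by
    intro x σ τ
    conv_lhs => rw [← u.sum_repr x]
    rw [Finset.mul_sum]
    simp only [mul_smul_comm, hmul, smul_smul]
    rw [map_sum, Finset.sum_apply']
    simp only [map_smul, u.repr_self, Finsupp.smul_single, smul_eq_mul,
      Finsupp.single_apply, mul_one]
    have : ∀ i : G, (τ * i = σ * τ) = (i = σ) := by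
      intro i; rw [mul_comm τ i]; simp [mul_left_inj]
    simp only [this]
    rw [Finset.sum_ite_eq' Finset.univ σ fun i => u.repr x i * (φ τ i : R)]
    simp
  have main : ∀ x : A, x ∈ Subring.center A ↔ ∀ σ : G, σ ∉ Greg → u.repr x σ = 0 := by
    intro x
    constructor
    · intro hx σ hσ
      rw [hGreg] at hσ
      simp only [Set.mem_setOf_eq, not_forall] at hσ
      obtain ⟨τ, hτ⟩ := hσ
      have hcomm : u τ * x = x * u τ := (Subring.mem_center_iff.mp hx) (u τ)
      have h1 := key1 x σ τ
      have h2 := key2 x σ τ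
      rw [hcomm, h1] at h2
      have hne : ((φ σ τ : Rˣ) : R) ≠ ((φ τ σ : Rˣ) : R) := by
        intro h
        apply hτ
        have : φ σ τ = φ τ σ := Units.ext h
        rw [this, mul_inv_cancel]
      have : u.repr x σ * (((φ σ τ : Rˣ) : R) - ((φ τ σ : Rˣ) : R)) = 0 := by
        rw [mul_sub, h2, sub_self]
      rcases mul_eq_zero.mp this with h | h
      · exact h
      · exact absurd (sub_eq_zero.mp h) hne
    · intro hx
      rw [Subring.mem_center_iff]
      intro y
      have hy : y ∈ Submodule.span R (Set.range u) := by
        rw [u.span_eq]; trivial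
      induction hy using Submodule.span_induction with
      | mem z hz =>
        obtain ⟨τ, rfl⟩ := hz
        apply u.repr.injective
        ext γ
        have hγ : γ = (γ * τ⁻¹) * τ := by group
        rw [hγ, key1 x (γ * τ⁻¹) τ, key2 x (γ * τ⁻¹) τ]
        by_cases h : (γ * τ⁻¹) ∈ Greg
        · rw [hGreg] at h
          have := h τ
          have : φ (γ * τ⁻¹) τ = φ τ (γ * τ⁻¹) := by
            rwa [mul_inv_eq_one] at this
          rw [this]
        · rw [hx _ h, zero_mul, zero_mul]
      | zero => rw [zero_mul, mul_zero]
      | add a b _ _ ha hb => rw [add_mul, mul_add, ha, hb]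
      | smul r a _ ha => rw [smul_mul_assoc, mul_smul_comm, ha]
  refine ⟨main, ?_⟩
  ext x
  rw [SetLike.mem_coe, SetLike.mem_coe, main x, Module.Basis.mem_span_image]
  constructor
  · intro h σ hσ
    by_contra hc
    exact Finsupp.mem_support_iff.mp hσ (h σ hc)
  · intro h σ hσ
    by_contra hc
    exact hσ (h (Finsupp.mem_support_iff.mpr hc))
end

section
/- Let G be a finite abelian group, R a domain, and φ ∈ Z²(G,U(R)). The twisted group ring RG^φ has center equal to R·u_1 (i.e. trivial center R) if and only if the pairing f_φ is nondegenerate, i.e. for every σ ≠ 1 in G there exists τ ∈ G with f_φ(σ,τ) ≠ 1. -/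
theorem stmt5 (R : Type*) [CommRing R] [IsDomain R]
    (G : Type*) [CommGroup G] [Fintype G]
    (φ : G → G → Rˣ)
    (hφ : ∀ a b c : G, φ b c * φ a (b * c) = φ a b * φ (a * b) c)
    (hφ1 : φ 1 1 = 1)
    (A : Type*) [Ring A] [Algebra R A] (u : Module.Basis G R A)
    (hmul : ∀ σ τ : G, u σ * u τ = ((φ σ τ : Rˣ) : R) • u (σ * τ)) :
    (Subring.center A : Set A) = Set.range (fun r : R => r • u 1) ↔
      ∀ σ : G, σ ≠ 1 → ∃ τ : G, φ σ τ * (φ τ σ)⁻¹ ≠ 1 := by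
  classical
  -- normalization
  have hσ1 : ∀ σ : G, φ σ 1 = 1 := by
    intro σ
    have := hφ σ 1 1
    simp only [hφ1, one_mul, mul_one] at this
    exact (mul_left_cancel (a := φ σ 1) (by rw [← this, mul_one])).symm
  -- u 1 = 1
  have hu1 : u 1 = 1 := by
    have hR : (LinearMap.mulRight R (u 1)) = LinearMap.id := by
      apply u.ext
      intro σ
      simp [LinearMap.mulRight_apply, hmul, hσ1]
    have := congrArg (fun f => f (1 : A)) hR
    simpa using this
  -- membership in center via basis
  have hcen : ∀ x : A, x ∈ Subring.center A ↔ ∀ τ : G, u τ * x = x * u τ := by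
    intro x
    constructor
    · intro hx τ
      exact (Subring.mem_center_iff.mp hx (u τ))
    · intro hx
      rw [Subring.mem_center_iff]
      intro b
      have hmaps : LinearMap.mulRight R x = LinearMap.mulLeft R x := by
        apply u.ext
        intro τ
        simpa using (hx τ)
      have := congrArg (fun f => f b) hmaps
      simpa using this
  -- key computation: coefficients of products with basis elements
  have hrepr1 : ∀ (x : A) (τ σ : G),
      u.repr (u τ * x) (τ * σ) = (φ τ σ : R) * u.repr x σ := by
    intro x τ σ
    have hx : u τ * x = ∑ g : G, (u.repr x g * (φ τ g : R)) • u (τ * g) := by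
      conv_lhs => rw [← u.sum_repr x]
      rw [Finset.mul_sum]
      refine Finset.sum_congr rfl fun g _ => ?_
      rw [mul_smul_comm, hmul, smul_smul]
    rw [hx, map_sum]
    simp only [map_smul, u.repr_self, Finsupp.coe_finset_sum, Finset.sum_apply,
      Finsupp.coe_smul, Pi.smul_apply, Finsupp.single_apply, smul_eq_mul]
    rw [Finset.sum_eq_single σ]
    · simp [mul_comm]
    · intro g _ hg
      rw [if_neg, mul_zero]
      exact fun h => hg (mul_left_cancel h)
    · simp
  have hrepr2 : ∀ (x : A) (τ σ : G),
      u.repr (x * u τ) (σ * τ) = (φ σ τ : R) * u.repr x σ := by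
    intro x τ σ
    have hx : x * u τ = ∑ g : G, (u.repr x g * (φ g τ : R)) • u (g * τ) := by
      conv_lhs => rw [← u.sum_repr x]
      rw [Finset.sum_mul]
      refine Finset.sum_congr rfl fun g _ => ?_
      rw [smul_mul_assoc, hmul, smul_smul]
    rw [hx, map_sum]
    simp only [map_smul, u.repr_self, Finsupp.coe_finset_sum, Finset.sum_apply,
      Finsupp.coe_smul, Pi.smul_apply, Finsupp.single_apply, smul_eq_mul]
    rw [Finset.sum_eq_single σ]
    · simp [mul_comm]
    · intro g _ hg
      rw [if_neg, mul_zero]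
      exact fun h => hg (mul_right_cancel h)
    · simp
  constructor
  · -- center = R u 1 → nondegenerate
    intro h σ hσ
    by_contra hcon
    push_neg at hcon
    have hsym : ∀ τ : G, φ σ τ = φ τ σ := by
      intro τ
      have := hcon τ
      rwa [mul_inv_eq_one] at this
    have hcent : u σ ∈ Subring.center A := by
      rw [hcen]
      intro τ
      rw [hmul, hmul, hsym τ, mul_comm τ σ]
    have : u σ ∈ Set.range (fun r : R => r • u 1) := by
      rw [← h]; exact hcent
    obtain ⟨r, hr⟩ := this
    have := congrArg (fun a => u.repr a σ) hr
    simp only [map_smul, u.repr_self, Finsupp.coe_smul, Pi.smul_apply,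
      Finsupp.single_apply, smul_eq_mul] at this
    rw [if_neg (fun h' => hσ h'.symm), mul_zero] at this
    exact one_ne_zero this.symm
  · -- nondegenerate → center = R u 1
    intro h
    ext x
    constructor
    · intro hx
      have hx' : ∀ τ : G, u τ * x = x * u τ := (hcen x).mp hx
      have hzero : ∀ σ : G, σ ≠ 1 → u.repr x σ = 0 := by
        intro σ hσ
        obtain ⟨τ, hτ⟩ := h σ hσ
        rw [Ne, mul_inv_eq_one] at hτ
        have h1 := hrepr1 x τ σ
        have h2 := hrepr2 x τ σ
        rw [mul_comm σ τ] at h2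
        rw [hx' τ, h2] at h1
        have : ((φ σ τ : R) - (φ τ σ : R)) * u.repr x σ = 0 := by
          rw [sub_mul, h1, sub_self]
        rcases mul_eq_zero.mp this with h' | h'
        · exact absurd (Units.ext (by linear_combination h')) hτ
        · exact h'
      have hrx : x = u.repr x 1 • u 1 := by
        apply u.repr.injective
        rw [map_smul, u.repr_self]
        ext g
        rw [Finsupp.smul_single, smul_eq_mul, mul_one, Finsupp.single_apply]
        by_cases hg : g = 1
        · subst hg; simp
        · rw [if_neg (fun h' => hg h'.symm), hzero g hg]
      exact ⟨u.repr x 1, hrx.symm⟩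
    · rintro ⟨r, rfl⟩
      simp only [hu1]
      rw [SetLike.mem_coe, Subring.mem_center_iff]
      intro g
      rw [mul_smul_comm, smul_mul_assoc, mul_one, one_mul]
end

section
/- Let p be a prime, n₁ ≥ n₂ ≥ … ≥ n_m ≥ 1, and G = Z/p^{n₁} × … × Z/p^{n_m}. Let ζ be a primitive p^{n₁}-th root of unity in a domain R. Any antisymmetric bihomomorphism f : G × G → U(R) with f(a,b)^{gcd(ord a, ord b)} = 1 is given by f(e_i, e_j) = ζ^{p^{n₁ - min(n_i,n_j)}·x_{ij}} for a unique antisymmetric matrix (x_{ij}) with x_{ij} ∈ Z/p^{min(n_i,n_j)}, where e_i is the i-th standard generator of G. -/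
theorem stmt8 (R : Type*) [CommRing R] [IsDomain R]
    (p : ℕ) (hp : p.Prime) (m : ℕ) (hm : 0 < m)
    (n : Fin m → ℕ) (hpos : ∀ i, 1 ≤ n i)
    (hanti : ∀ i j : Fin m, i ≤ j → n j ≤ n i)
    (ζ : Rˣ) (hζ : IsPrimitiveRoot ζ (p ^ n ⟨0, hm⟩))
    (f : (∀ i : Fin m, ZMod (p ^ n i)) → (∀ i : Fin m, ZMod (p ^ n i)) → Rˣ)
    (hf1 : ∀ a b c, f (a + b) c = f a c * f b c)
    (hf2 : ∀ a b c, f a (b + c) = f a b * f a c)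
    (hfa : ∀ a b, f a b * f b a = 1)
    (hfd : ∀ a, f a a = 1)
    (hford : ∀ a b, f a b ^ Nat.gcd (addOrderOf a) (addOrderOf b) = 1)
    (e : Fin m → (∀ i : Fin m, ZMod (p ^ n i)))
    (he : ∀ i, e i = Pi.single i 1) :
    ∃! x : Fin m → Fin m → ℕ,
      (∀ i j, x i j < p ^ Nat.min (n i) (n j)) ∧
      (∀ i j, (x i j + x j i) % p ^ Nat.min (n i) (n j) = 0) ∧
      (∀ i j, f (e i) (e j) = ζ ^ (p ^ (n ⟨0, hm⟩ - Nat.min (n i) (n j)) * x i j)) := by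
  have hp0 : 0 < p := hp.pos
  have hle : ∀ i, n i ≤ n ⟨0, hm⟩ := fun i => hanti ⟨0, hm⟩ i (by simp [Fin.le_def])
  have hmin_le : ∀ i j : Fin m, Nat.min (n i) (n j) ≤ n ⟨0, hm⟩ :=
    fun i j => le_trans (Nat.min_le_left _ _) (hle i)
  -- order of e i divides p ^ n i
  have hord : ∀ i, addOrderOf (e i) ∣ p ^ n i := by
    intro i
    rw [he, addOrderOf_dvd_iff_nsmul_eq_zero]
    funext j
    simp only [Pi.smul_apply, Pi.zero_apply]
    rcases eq_or_ne j i with rfl | hj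
    · simp [nsmul_eq_mul]
    · simp [Pi.single_eq_of_ne hj]
  have hgcd : ∀ i j, Nat.gcd (addOrderOf (e i)) (addOrderOf (e j)) ∣
      p ^ Nat.min (n i) (n j) := by
    intro i j
    have h1 := (Nat.gcd_dvd_left (addOrderOf (e i)) (addOrderOf (e j))).trans (hord i)
    have h2 := (Nat.gcd_dvd_right (addOrderOf (e i)) (addOrderOf (e j))).trans (hord j)
    rcases le_total (n i) (n j) with h | h
    · rw [show Nat.min (n i) (n j) = n i from Nat.min_eq_left h]; exact h1
    · rw [show Nat.min (n i) (n j) = n j from Nat.min_eq_right h]; exact h2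
  have hpow : ∀ i j, f (e i) (e j) ^ p ^ Nat.min (n i) (n j) = 1 := by
    intro i j
    obtain ⟨c, hc⟩ := hgcd i j
    rw [hc, pow_mul, hford, one_pow]
  -- primitive roots
  have hζij : ∀ i j : Fin m, IsPrimitiveRoot (ζ ^ p ^ (n ⟨0, hm⟩ - Nat.min (n i) (n j)))
      (p ^ Nat.min (n i) (n j)) := by
    intro i j
    exact hζ.pow (Nat.pow_pos hp0)
      (by rw [← pow_add, Nat.sub_add_cancel (hmin_le i j)])
  have hex : ∀ i j : Fin m, ∃ x, x < p ^ Nat.min (n i) (n j) ∧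
      f (e i) (e j) = ζ ^ (p ^ (n ⟨0, hm⟩ - Nat.min (n i) (n j)) * x) := by
    intro i j
    haveI : NeZero (p ^ Nat.min (n i) (n j)) := ⟨(Nat.pow_pos hp0).ne'⟩
    obtain ⟨x, hx, hxe⟩ := (hζij i j).eq_pow_of_mem_rootsOfUnity
      ((mem_rootsOfUnity _ _).mpr (hpow i j))
    exact ⟨x, hx, by rw [← hxe, ← pow_mul]⟩
  set X : Fin m → Fin m → ℕ := fun i j => (hex i j).choose with hX
  have hX1 : ∀ i j, X i j < p ^ Nat.min (n i) (n j) := fun i j => (hex i j).choose_spec.1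
  have hX3 : ∀ i j, f (e i) (e j) = ζ ^ (p ^ (n ⟨0, hm⟩ - Nat.min (n i) (n j)) * X i j) :=
    fun i j => (hex i j).choose_spec.2
  refine ⟨X, ⟨hX1, ?_, hX3⟩, ?_⟩
  · intro i j
    have hmc : Nat.min (n j) (n i) = Nat.min (n i) (n j) := Nat.min_comm _ _
    have h1 := hX3 i j
    have h2 := hX3 j i
    rw [hmc] at h2
    have h := hfa (e i) (e j)
    rw [h1, h2, ← pow_add, ← Nat.mul_add, pow_mul] at h
    have hdvd := (hζij i j).dvd_of_pow_eq_one _ h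
    obtain ⟨c, hc⟩ := hdvd
    rw [hc, Nat.mul_mod_right]
  · intro y ⟨hy1, _, hy3⟩
    funext i j
    have h1 := hy3 i j
    rw [hX3 i j, pow_mul, pow_mul] at h1
    exact ((hζij i j).pow_inj (hX1 i j) (hy1 i j) h1).symm
end

section
/- Let G be a finite abelian p-group written as G = (Z/p^{n₁})^{m₁} × … × (Z/p^{n_k})^{m_k} with n₁ > n₂ > … > n_k, and let f be an antisymmetric bihomomorphism on G encoded by the block antisymmetric matrix A = (A_{ij}) where A_{ij} ∈ M_{m_i × m_j}(Z/p^{n_j}Z) (using n_j ≤ n_i convention via min(n_i,n_j)). If every diagonal block A_{ii} is invertible over Z/p^{n_i}Z, then the pairing f is nondegenerate, i.e. the only g ∈ G with f(g,h) = 1 for all h ∈ G is g = 1. -/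
lemma aux_unit {ι : Type*} [Fintype ι] [DecidableEq ι] (p a b : ℕ) (hp : p.Prime) (ha : 1 ≤ a)
    (M : ι → ι → ℕ) (h : IsUnit (Matrix.of fun i j => ((M i j : ℕ) : ZMod (p^a)))) :
    IsUnit (Matrix.of fun i j => ((M i j : ℕ) : ZMod (p^b))) := by
  haveI : Fact p.Prime := ⟨hp⟩
  set Mz : Matrix ι ι ℤ := Matrix.of (fun i j => ((M i j : ℕ) : ℤ)) with hMz
  have hdet : ∀ N : ℕ, (((Mz.det : ℤ) : ZMod N)) = (Matrix.of fun i j => ((M i j : ℕ) : ZMod N)).det := by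
    intro N
    have := RingHom.map_det (Int.castRingHom (ZMod N)) Mz
    simp only [eq_intCast] at this
    rw [this]
    congr 1
    ext i j
    simp [hMz]
  rw [Matrix.isUnit_iff_isUnit_det] at h ⊢
  rw [← hdet] at h ⊢
  set d := Mz.det with hd
  have h1 : IsUnit ((d : ZMod p)) := by
    have := h.map (ZMod.castHom (dvd_pow_self p (by omega : a ≠ 0)) (ZMod p))
    rwa [map_intCast] at this
  have h2 : ¬ (p:ℤ) ∣ d := by
    intro hdvd
    rw [(ZMod.intCast_zmod_eq_zero_iff_dvd d p).2 hdvd] at h1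
    exact not_isUnit_zero h1
  have h3 : ¬ p ∣ d.natAbs := fun hc => h2 (Int.natCast_dvd.mpr hc)
  have h4 : (d.natAbs).Coprime (p^b) :=
    Nat.Coprime.pow_right b (Nat.coprime_comm.mp (hp.coprime_iff_not_dvd.2 h3))
  have h5 : IsUnit ((d.natAbs : ZMod (p^b))) := (ZMod.isUnit_iff_coprime _ _).2 h4
  have h6 : ((d.natAbs : ℤ) : ZMod (p^b)) = ((d.natAbs : ℕ) : ZMod (p^b)) := Int.cast_natCast _
  rcases Int.natAbs_eq d with hdd | hdd
  · rw [hdd, h6]; exact h5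
  · rw [hdd, Int.cast_neg, h6]; exact h5.neg

theorem stmt11 (R : Type*) [CommRing R] [IsDomain R]
    (p : ℕ) (hp : p.Prime) (k : ℕ) (hk : 0 < k)
    (n : Fin k → ℕ) (hpos : ∀ i, 1 ≤ n i)
    (hstrict : ∀ i j : Fin k, i < j → n j < n i)
    (m : Fin k → ℕ)
    (ζ : Rˣ) (hζ : IsPrimitiveRoot ζ (p ^ n ⟨0, hk⟩))
    (f : (∀ i : Fin k, Fin (m i) → ZMod (p ^ n i)) →
         (∀ i : Fin k, Fin (m i) → ZMod (p ^ n i)) → Rˣ)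
    (hf1 : ∀ a b c, f (a + b) c = f a c * f b c)
    (hf2 : ∀ a b c, f a (b + c) = f a b * f a c)
    (hfa : ∀ a b, f a b * f b a = 1)
    (e : ∀ i : Fin k, Fin (m i) → (∀ i : Fin k, Fin (m i) → ZMod (p ^ n i)))
    (he : ∀ i a, e i a = Pi.single i (Pi.single a 1))
    (x : (i : Fin k) → (j : Fin k) → Fin (m i) → Fin (m j) → ℕ)
    (hx : ∀ i j a b, f (e i a) (e j b)
        = ζ ^ (p ^ (n ⟨0, hk⟩ - Nat.min (n i) (n j)) * x i j a b))
    (hinv : ∀ i : Fin k,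
      IsUnit (Matrix.of fun a b : Fin (m i) => ((x i i a b : ℕ) : ZMod (p ^ n i)))) :
    ∀ g : (∀ i : Fin k, Fin (m i) → ZMod (p ^ n i)),
      (∀ h, f g h = 1) → g = 0 := by
  intro g hg
  set N0 := n ⟨0, hk⟩ with hN0
  have hN : ∀ i, n i ≤ N0 := by
    intro i
    rcases Nat.eq_zero_or_pos i.val with h0 | h0
    · have : i = ⟨0, hk⟩ := Fin.ext h0
      rw [this]
    · exact le_of_lt (hstrict ⟨0, hk⟩ i (by simpa [Fin.lt_def] using h0))
  haveI instNZ : ∀ i : Fin k, NeZero (p ^ n i) := fun i => ⟨(pow_pos hp.pos _).ne'⟩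
  -- basic multiplicativity
  have hf0 : ∀ h, f 0 h = 1 := by
    intro h
    have h0 := hf1 0 0 h
    rw [add_zero] at h0
    exact (left_eq_mul.mp h0)
  have hpow : ∀ (c : ℕ) (a h), f (c • a) h = f a h ^ c := by
    intro c a h
    induction c with
    | zero => simpa using hf0 h
    | succ c ih => rw [succ_nsmul, hf1, ih, pow_succ]
  have hsum : ∀ (ι : Type) (t : Finset ι) (c : ι → (∀ i : Fin k, Fin (m i) → ZMod (p ^ n i))) (h),
      f (∑ i ∈ t, c i) h = ∏ i ∈ t, f (c i) h := by
    intro ι t c h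
    induction t using Finset.cons_induction with
    | empty => simpa using hf0 h
    | cons i t hit ih => rw [Finset.sum_cons, Finset.prod_cons, hf1, ih]
  -- decomposition of g
  have hdecomp : g = ∑ i, ∑ a, ((g i a).val) • e i a := by
    have hes : ∀ (i : Fin k) (a : Fin (m i)), ((g i a).val) • e i a
        = ((g i a).val) • (Pi.single i (Pi.single a (1 : ZMod (p ^ n i))) :
          ∀ i : Fin k, Fin (m i) → ZMod (p ^ n i)) := by
      intro i a; rw [he]
    rw [Finset.sum_congr rfl (fun i _ => Finset.sum_congr rfl (fun a _ => hes i a))]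
    have inner : ∀ i : Fin k, ∑ a, ((g i a).val) • (Pi.single a (1 : ZMod (p ^ n i)) :
        Fin (m i) → ZMod (p ^ n i)) = g i := by
      intro i
      have h1 : ∀ a : Fin (m i), ((g i a).val) • (Pi.single a (1 : ZMod (p ^ n i)) :
          Fin (m i) → ZMod (p ^ n i)) = Pi.single a (g i a) := by
        intro a
        haveI := instNZ i
        rw [← Pi.single_smul, nsmul_eq_mul, mul_one, ZMod.natCast_val, ZMod.cast_id]
      rw [Finset.sum_congr rfl (fun a _ => h1 a), Finset.univ_sum_single]
    conv_lhs => rw [← Finset.univ_sum_single g]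
    refine Finset.sum_congr rfl (fun i _ => ?_)
    have h2 : ∀ a : Fin (m i), ((g i a).val) • (Pi.single i (Pi.single a (1 : ZMod (p ^ n i))) :
        ∀ i : Fin k, Fin (m i) → ZMod (p ^ n i))
        = (AddMonoidHom.single (fun i : Fin k => Fin (m i) → ZMod (p ^ n i)) i)
            (((g i a).val) • (Pi.single a (1 : ZMod (p ^ n i)) : Fin (m i) → ZMod (p ^ n i))) := by
      intro a
      simp only [AddMonoidHom.single_apply]
      rw [Pi.single_smul]
    rw [Finset.sum_congr rfl (fun a _ => h2 a), ← map_sum, inner i, AddMonoidHom.single_apply]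
  -- kernel equations
  set ghat : ∀ i : Fin k, Fin (m i) → ZMod (p ^ N0) :=
      (fun i a => (p : ZMod (p ^ N0)) ^ (N0 - n i) * ((g i a).val : ZMod (p ^ N0))) with hghat
  have hker : ∀ (j : Fin k) (b : Fin (m j)),
      ∑ i, ∑ a, ghat i a * ((p : ZMod (p ^ N0)) ^ (n i - Nat.min (n i) (n j)) * (x i j a b : ZMod (p ^ N0))) = 0 := by
    intro j b
    have hE : f g (e j b)
        = ζ ^ (∑ i, ∑ a, p ^ (N0 - Nat.min (n i) (n j)) * x i j a b * (g i a).val) := by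
      conv_lhs => rw [hdecomp]
      rw [hsum]
      rw [Finset.prod_congr rfl (fun i _ => hsum _ _ _ _)]
      rw [Finset.prod_congr rfl (fun i _ => Finset.prod_congr rfl (fun a _ => by
        rw [hpow, hx, ← pow_mul]))]
      rw [Finset.prod_congr rfl (fun i _ => Finset.prod_pow_eq_pow_sum _ _ _),
        Finset.prod_pow_eq_pow_sum]
    have hdvd : p ^ N0 ∣ ∑ i, ∑ a, p ^ (N0 - Nat.min (n i) (n j)) * x i j a b * (g i a).val :=
      hζ.dvd_of_pow_eq_one _ (by rw [← hE]; exact hg (e j b))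
    have hc : ((∑ i, ∑ a, p ^ (N0 - Nat.min (n i) (n j)) * x i j a b * (g i a).val : ℕ)
        : ZMod (p ^ N0)) = 0 := (ZMod.natCast_eq_zero_iff _ _).2 hdvd
    push_cast at hc
    rw [← hc]
    refine Finset.sum_congr rfl fun i _ => Finset.sum_congr rfl fun a _ => ?_
    have hmin : Nat.min (n i) (n j) ≤ n i := Nat.min_le_left _ _
    have hni := hN i
    have hsplit : N0 - Nat.min (n i) (n j) = (N0 - n i) + (n i - Nat.min (n i) (n j)) := by omega
    rw [hsplit, pow_add]
    simp only [hghat]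
    ring
  -- main induction
  have main : ∀ s : ℕ, ∀ (i : Fin k) (a : Fin (m i)),
      ghat i a ∈ Ideal.span {(p : ZMod (p ^ N0)) ^ s} := by
    intro s
    induction s with
    | zero =>
      intro i a
      rw [pow_zero]
      exact Ideal.mem_span_singleton.2 (one_dvd _)
    | succ s ih =>
      have step : ∀ i : Fin k,
          (∀ i' : Fin k, i < i' → ∀ a, ghat i' a ∈ Ideal.span {(p : ZMod (p ^ N0)) ^ (s + 1)}) →
          ∀ a, ghat i a ∈ Ideal.span {(p : ZMod (p ^ N0)) ^ (s + 1)} := by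
        intro i hIH
        have hX : IsUnit (Matrix.of fun a b : Fin (m i) => ((x i i a b : ℕ) : ZMod (p ^ N0))) :=
          aux_unit p (n i) N0 hp (hpos i) _ (hinv i)
        obtain ⟨u, hu⟩ := hX
        have hv : ∀ b : Fin (m i),
            (∑ a, ghat i a * ((x i i a b : ℕ) : ZMod (p ^ N0)))
              ∈ Ideal.span {(p : ZMod (p ^ N0)) ^ (s + 1)} := by
          intro b
          have h0 := hker i b
          rw [← Finset.add_sum_erase _ _ (Finset.mem_univ i)] at h0
          have hdiag : ∑ a, ghat i a * ((p : ZMod (p ^ N0)) ^ (n i - Nat.min (n i) (n i))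
                * ((x i i a b : ℕ) : ZMod (p ^ N0)))
              = ∑ a, ghat i a * ((x i i a b : ℕ) : ZMod (p ^ N0)) := by
            simp [Nat.min_self]
          rw [hdiag] at h0
          rw [eq_neg_of_add_eq_zero_left h0]
          refine neg_mem (Ideal.sum_mem _ fun i' hi' => Ideal.sum_mem _ fun a _ => ?_)
          have hne : i' ≠ i := Finset.ne_of_mem_erase hi'
          rcases lt_or_gt_of_ne hne with hlt | hgt
          · have hni : n i < n i' := hstrict i' i hlt
            have hmin : Nat.min (n i') (n i) = n i := Nat.min_eq_right (le_of_lt hni)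
            obtain ⟨c, hc⟩ := Ideal.mem_span_singleton.1 (ih i' a)
            rw [Ideal.mem_span_singleton]
            refine ⟨c * ((p : ZMod (p ^ N0)) ^ (n i' - Nat.min (n i') (n i) - 1)
              * (x i' i a b : ZMod (p ^ N0))), ?_⟩
            rw [hc]
            have hsp : n i' - Nat.min (n i') (n i) = 1 + (n i' - Nat.min (n i') (n i) - 1) := by
              rw [hmin]; omega
            conv_lhs => rw [hsp]
            ring
          · exact Ideal.mul_mem_right _ _ (hIH i' hgt a)
        intro a
        have hfun : (fun a => ghat i a)
            = Matrix.vecMul (fun b => ∑ a, ghat i a * ((x i i a b : ℕ) : ZMod (p ^ N0)))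
                ((↑u⁻¹ : Matrix (Fin (m i)) (Fin (m i)) (ZMod (p ^ N0)))) := by
          have hv2 : (fun b => ∑ a, ghat i a * ((x i i a b : ℕ) : ZMod (p ^ N0)))
              = Matrix.vecMul (fun a => ghat i a) (↑u : Matrix (Fin (m i)) (Fin (m i)) (ZMod (p ^ N0))) := by
            funext b
            rw [hu]
            simp [Matrix.vecMul, dotProduct]
          rw [hv2, Matrix.vecMul_vecMul, Units.mul_inv, Matrix.vecMul_one]
        have key := congrFun hfun a
        rw [key]
        have : Matrix.vecMul (fun b => ∑ a, ghat i a * ((x i i a b : ℕ) : ZMod (p ^ N0)))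
            ((↑u⁻¹ : Matrix (Fin (m i)) (Fin (m i)) (ZMod (p ^ N0)))) a
            = ∑ b, (∑ a', ghat i a' * ((x i i a' b : ℕ) : ZMod (p ^ N0)))
                * ((↑u⁻¹ : Matrix (Fin (m i)) (Fin (m i)) (ZMod (p ^ N0))) b a) := by
          simp [Matrix.vecMul, dotProduct]
        rw [this]
        exact Ideal.sum_mem _ fun b _ => Ideal.mul_mem_right _ _ (hv b)
      intro i
      exact (wellFounded_gt (α := Fin k)).induction i step
  -- conclusion
  have hfin : ∀ (i : Fin k) (a : Fin (m i)), g i a = 0 := by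
    intro i a
    have h1 : ghat i a = 0 := by
      have := main N0 i a
      rw [Ideal.mem_span_singleton] at this
      have hz : (p : ZMod (p ^ N0)) ^ N0 = 0 := by
        have : ((p ^ N0 : ℕ) : ZMod (p ^ N0)) = 0 := ZMod.natCast_self _
        push_cast at this
        exact this
      rw [hz, zero_dvd_iff] at this
      exact this
    have h2 : ((p ^ (N0 - n i) * (g i a).val : ℕ) : ZMod (p ^ N0)) = 0 := by
      push_cast
      exact h1
    rw [ZMod.natCast_eq_zero_iff] at h2
    have h3 : p ^ (N0 - n i) * p ^ (n i) ∣ p ^ (N0 - n i) * (g i a).val := by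
      rw [← pow_add]
      have : N0 - n i + n i = N0 := by have := hN i; omega
      rw [this]
      exact h2
    have h4 : p ^ n i ∣ (g i a).val :=
      (Nat.mul_dvd_mul_iff_left (pow_pos hp.pos _)).mp h3
    have h5 : (((g i a).val : ℕ) : ZMod (p ^ n i)) = 0 :=
      (ZMod.natCast_eq_zero_iff _ _).2 h4
    haveI := instNZ i
    rwa [ZMod.natCast_val, ZMod.cast_id] at h5
  funext i a
  exact hfin i a
end

section
/- With notation as in the Diagonal Block Theorem (G = (Z/p^{n₁})^{m₁} × … × (Z/p^{n_k})^{m_k}, n₁ > … > n_k, pairing encoded by block antisymmetric matrix A = (A_{ij})): if some diagonal block A_{ii} is not invertible over Z/p^{n_i}Z, then the pairing f is degenerate, i.e. there exists g ≠ 1 in G with f(g,h) = 1 for all h ∈ G. -/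
theorem stmt12_aux_ker {k : ℕ} (p : ℕ) [Fact p.Prime] (m : Fin k → ℕ)
    (X : (j : Fin k) → (l : Fin k) → Fin (m j) → Fin (m l) → ZMod p) (i : Fin k)
    (hdet : (Matrix.of (fun a b => X i i a b)).det = 0) :
    ∃ w : ∀ j : Fin k, Fin (m j) → ZMod p, w ≠ 0 ∧
      ∀ l b, (∑ j : Fin k, ∑ a : Fin (m j),
        if l ≤ j then w j a * X j l a b else 0) = 0 := by
  haveI : NeZero p := ⟨(Fact.out : p.Prime).ne_zero⟩
  obtain ⟨v, hv, hvX⟩ := Matrix.exists_vecMul_eq_zero_iff.mpr hdet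
  let T : (∀ j : Fin k, Fin (m j) → ZMod p) → (∀ j : Fin k, Fin (m j) → ZMod p) :=
    fun w l b => ∑ j : Fin k, ∑ a : Fin (m j), if l ≤ j then w j a * X j l a b else 0
  have hTsub : ∀ w₁ w₂, T (w₁ - w₂) = T w₁ - T w₂ := by
    intro w₁ w₂
    funext l b
    show (∑ j : Fin k, ∑ a : Fin (m j), if l ≤ j then (w₁ - w₂) j a * X j l a b else 0)
      = (∑ j : Fin k, ∑ a : Fin (m j), if l ≤ j then w₁ j a * X j l a b else 0)
      - (∑ j : Fin k, ∑ a : Fin (m j), if l ≤ j then w₂ j a * X j l a b else 0)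
    rw [← Finset.sum_sub_distrib]
    refine Finset.sum_congr rfl fun j _ => ?_
    rw [← Finset.sum_sub_distrib]
    refine Finset.sum_congr rfl fun a _ => ?_
    by_cases hlj : l ≤ j <;> simp [hlj, sub_mul]
  by_cases hinj : Function.Injective T
  · exfalso
    have hTw₀ : ∀ l, i ≤ l → T (Pi.single i v) l = 0 := by
      intro l hl
      funext b
      show (∑ j : Fin k, ∑ a : Fin (m j),
        if l ≤ j then (Pi.single i v : ∀ j : Fin k, Fin (m j) → ZMod p) j a * X j l a b else 0) = 0
      rw [Finset.sum_eq_single i]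
      · rcases eq_or_lt_of_le hl with h | h
        · subst h
          simp only [Pi.single_eq_same, if_pos le_rfl]
          have := congrFun hvX b
          simpa [Matrix.vecMul, dotProduct] using this
        · have : ¬ l ≤ i := not_le.mpr h
          simp [this]
      · intro j _ hj
        rw [Pi.single_eq_of_ne hj]
        simp
      · intro h; exact absurd (Finset.mem_univ i) h
    have hinv : ∀ u : ∀ j : Fin k, Fin (m j) → ZMod p,
        (∀ j, i ≤ j → u j = 0) → ∀ l, i ≤ l → T u l = 0 := by
      intro u hu l hl
      funext b
      show (∑ j : Fin k, ∑ a : Fin (m j), if l ≤ j then u j a * X j l a b else 0) = 0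
      refine Finset.sum_eq_zero fun j _ => Finset.sum_eq_zero fun a _ => ?_
      by_cases hlj : l ≤ j
      · rw [hu j (hl.trans hlj)]; simp
      · simp [hlj]
    let S := {u : ∀ j : Fin k, Fin (m j) → ZMod p // ∀ j, i ≤ j → u j = 0}
    let T' : S → S := fun u => ⟨T u.1, fun l hl => hinv u.1 u.2 l hl⟩
    have hT'inj : Function.Injective T' := by
      intro u₁ u₂ h
      exact Subtype.ext (hinj (congrArg Subtype.val h))
    have hT'surj : Function.Surjective T' := Finite.injective_iff_surjective.mp hT'inj
    obtain ⟨u, hu⟩ := hT'surj ⟨T (Pi.single i v), fun l hl => hTw₀ l hl⟩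
    have hu1 : u.1 = Pi.single i v := hinj (congrArg Subtype.val hu)
    have h0 : (Pi.single i v : ∀ j : Fin k, Fin (m j) → ZMod p) i = 0 := hu1 ▸ u.2 i le_rfl
    rw [Pi.single_eq_same] at h0
    exact hv h0
  · rw [Function.not_injective_iff] at hinj
    obtain ⟨w₁, w₂, heq, hne⟩ := hinj
    refine ⟨w₁ - w₂, sub_ne_zero.mpr hne, fun l b => ?_⟩
    have hz : T (w₁ - w₂) = 0 := by rw [hTsub, heq, sub_self]
    exact congrFun (congrFun hz l) b

theorem stmt12 (R : Type*) [CommRing R] [IsDomain R]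
    (p : ℕ) (hp : p.Prime) (k : ℕ) (hk : 0 < k)
    (n : Fin k → ℕ) (hpos : ∀ i, 1 ≤ n i)
    (hstrict : ∀ i j : Fin k, i < j → n j < n i)
    (m : Fin k → ℕ)
    (ζ : Rˣ) (hζ : IsPrimitiveRoot ζ (p ^ n ⟨0, hk⟩))
    (f : (∀ i : Fin k, Fin (m i) → ZMod (p ^ n i)) →
         (∀ i : Fin k, Fin (m i) → ZMod (p ^ n i)) → Rˣ)
    (hf1 : ∀ a b c, f (a + b) c = f a c * f b c)
    (hf2 : ∀ a b c, f a (b + c) = f a b * f a c)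
    (hfa : ∀ a b, f a b * f b a = 1)
    (e : ∀ i : Fin k, Fin (m i) → (∀ i : Fin k, Fin (m i) → ZMod (p ^ n i)))
    (he : ∀ i a, e i a = Pi.single i (Pi.single a 1))
    (x : (i : Fin k) → (j : Fin k) → Fin (m i) → Fin (m j) → ℕ)
    (hx : ∀ i j a b, f (e i a) (e j b)
        = ζ ^ (p ^ (n ⟨0, hk⟩ - Nat.min (n i) (n j)) * x i j a b))
    (hsing : ∃ i : Fin k,
      ¬ IsUnit (Matrix.of fun a b : Fin (m i) => ((x i i a b : ℕ) : ZMod (p ^ n i)))) :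
    ∃ g : (∀ i : Fin k, Fin (m i) → ZMod (p ^ n i)),
      g ≠ 0 ∧ ∀ h, f g h = 1 := by
  haveI : Fact p.Prime := ⟨hp⟩
  haveI : NeZero p := ⟨hp.ne_zero⟩
  haveI : ∀ j : Fin k, NeZero (p ^ n j) := fun j => ⟨pow_ne_zero _ hp.ne_zero⟩
  obtain ⟨i, hi⟩ := hsing
  set i0 : Fin k := ⟨0, hk⟩ with hi0
  -- monotonicity facts
  have hmono : ∀ {a b : Fin k}, a ≤ b → n b ≤ n a := by
    intro a b hab
    rcases eq_or_lt_of_le hab with h | h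
    · exact h ▸ le_rfl
    · exact (hstrict a b h).le
  have hnle : ∀ j : Fin k, n j ≤ n i0 := fun j => hmono (Fin.mk_le_mk.mpr (Nat.zero_le _))
  -- Step 1: the diagonal block is singular mod p
  have hdvdp : p ∣ p ^ n i := dvd_pow_self p (Nat.one_le_iff_ne_zero.mp (hpos i))
  set A : Matrix (Fin (m i)) (Fin (m i)) (ZMod (p ^ n i)) :=
    Matrix.of (fun a b : Fin (m i) => ((x i i a b : ℕ) : ZMod (p ^ n i))) with hA
  have hpd : p ∣ A.det.val := by
    by_contra hnd
    apply hi
    rw [Matrix.isUnit_iff_isUnit_det]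
    have hco : Nat.Coprime A.det.val (p ^ n i) :=
      Nat.Coprime.pow_right _ (Nat.coprime_comm.mp ((Nat.Prime.coprime_iff_not_dvd hp).mpr hnd))
    have := (ZMod.isUnit_iff_coprime A.det.val (p ^ n i)).mpr hco
    rwa [ZMod.natCast_zmod_val] at this
  set X : (j : Fin k) → (l : Fin k) → Fin (m j) → Fin (m l) → ZMod p :=
    fun j l a b => ((x j l a b : ℕ) : ZMod p) with hXdef
  have hdet0 : (Matrix.of (fun a b => X i i a b)).det = 0 := by
    have hmap : (ZMod.castHom hdvdp (ZMod p)).mapMatrix A = Matrix.of (fun a b => X i i a b) := by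
      ext a b
      simp [hA, hXdef]
    have h1 : (Matrix.of (fun a b => X i i a b)).det = ZMod.castHom hdvdp (ZMod p) A.det := by
      rw [← hmap, ← RingHom.map_det]
    rw [h1]
    have h2 : (ZMod.castHom hdvdp (ZMod p)) A.det = ((A.det.val : ℕ) : ZMod p) := by
      rw [ZMod.castHom_apply, ← ZMod.natCast_val]
    rw [h2, ZMod.natCast_eq_zero_iff]
    exact hpd
  -- Step 2: kernel vector of the block-triangular system
  obtain ⟨w, hw0, hker⟩ := stmt12_aux_ker p m X i hdet0
  -- Step 3: the degenerate element g
  set g : ∀ j : Fin k, Fin (m j) → ZMod (p ^ n j) :=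
    fun j a => ((p ^ (n j - 1) * (w j a).val : ℕ) : ZMod (p ^ n j)) with hgdef
  have hlt : ∀ (j : Fin k) (a : Fin (m j)), p ^ (n j - 1) * (w j a).val < p ^ n j := by
    intro j a
    calc p ^ (n j - 1) * (w j a).val < p ^ (n j - 1) * p :=
          (Nat.mul_lt_mul_left (pow_pos hp.pos _)).mpr (ZMod.val_lt _)
      _ = p ^ (n j - 1 + 1) := (pow_succ p _).symm
      _ = p ^ n j := by congr 1; have := hpos j; omega
  have hgval : ∀ (j : Fin k) (a : Fin (m j)),
      (g j a).val = p ^ (n j - 1) * (w j a).val := by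
    intro j a
    exact ZMod.val_cast_of_lt (hlt j a)
  have hgne : g ≠ 0 := by
    obtain ⟨j, hj⟩ := Function.ne_iff.mp hw0
    obtain ⟨a, ha⟩ := Function.ne_iff.mp hj
    intro h0
    have hja : g j a = 0 := by rw [h0]; rfl
    rw [hgdef] at hja
    rw [ZMod.natCast_eq_zero_iff] at hja
    have hvne : (w j a).val ≠ 0 := by
      intro h
      apply ha
      rw [← ZMod.natCast_zmod_val (w j a), h]
      simp
    have := Nat.eq_zero_of_dvd_of_lt hja (hlt j a)
    rcases Nat.mul_eq_zero.mp this with h | h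
    · exact pow_ne_zero _ hp.ne_zero h
    · exact hvne h
  -- Step 4: pairing homomorphism lemmas
  have hf0r : ∀ a, f a 0 = 1 := by
    intro a
    have := hf2 a 0 0
    rw [add_zero] at this
    exact (left_eq_mul.mp this)
  have hf0l : ∀ c, f 0 c = 1 := by
    intro c
    have := hf1 0 0 c
    rw [add_zero] at this
    exact (left_eq_mul.mp this)
  have hfpow_l : ∀ (c : ℕ) a b, f (c • a) b = f a b ^ c := by
    intro c
    induction c with
    | zero => intro a b; rw [zero_smul, pow_zero]; exact hf0l b
    | succ t ih => intro a b; rw [succ_nsmul, hf1, ih, pow_succ]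
  have hfpow_r : ∀ (c : ℕ) a b, f a (c • b) = f a b ^ c := by
    intro c
    induction c with
    | zero => intro a b; rw [zero_smul, pow_zero]; exact hf0r a
    | succ t ih => intro a b; rw [succ_nsmul, hf2, ih, pow_succ]
  have hfsum_l : ∀ {ι : Type} (s : Finset ι)
      (u : ι → (∀ i : Fin k, Fin (m i) → ZMod (p ^ n i))) c,
      f (∑ t ∈ s, u t) c = ∏ t ∈ s, f (u t) c := by
    intro ι s u c
    induction s using Finset.cons_induction with
    | empty => simpa using hf0l c
    | cons t s ht ih => rw [Finset.sum_cons, Finset.prod_cons, hf1, ih]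
  have hfsum_r : ∀ {ι : Type} (s : Finset ι)
      (u : ι → (∀ i : Fin k, Fin (m i) → ZMod (p ^ n i))) c,
      f c (∑ t ∈ s, u t) = ∏ t ∈ s, f c (u t) := by
    intro ι s u c
    induction s using Finset.cons_induction with
    | empty => simpa using hf0r c
    | cons t s ht ih => rw [Finset.sum_cons, Finset.prod_cons, hf2, ih]
  -- Step 5: decomposition into generators
  have hdecomp : ∀ h : (∀ i : Fin k, Fin (m i) → ZMod (p ^ n i)),
      h = ∑ j : Fin k, ∑ b : Fin (m j), (h j b).val • e j b := by
    intro h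
    funext j' b'
    simp only [Finset.sum_apply, Pi.smul_apply, he]
    rw [Finset.sum_eq_single j']
    · rw [Finset.sum_eq_single b']
      · rw [Pi.single_eq_same, Pi.single_eq_same, nsmul_eq_mul, mul_one,
          ZMod.natCast_zmod_val]
      · intro b _ hb
        rw [Pi.single_eq_same, Pi.single_eq_of_ne (Ne.symm hb), smul_zero]
      · intro hb'; exact absurd (Finset.mem_univ b') hb'
    · intro j _ hj
      rw [Finset.sum_eq_zero]
      intro b _
      rw [Pi.single_eq_of_ne (Ne.symm hj)]
      simp
    · intro h'; exact absurd (Finset.mem_univ j') h'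
  -- Step 6: f g (e l b) = 1
  have key : ∀ (l : Fin k) (b : Fin (m l)), f g (e l b) = 1 := by
    intro l b
    have hstep : f g (e l b) = ζ ^ (∑ j : Fin k, ∑ a : Fin (m j),
        (g j a).val * (p ^ (n i0 - Nat.min (n j) (n l)) * x j l a b)) := by
      conv_lhs => rw [hdecomp g]
      rw [hfsum_l]
      refine Eq.trans (Finset.prod_congr rfl fun j _ => ?_)
        (Finset.prod_pow_eq_pow_sum _ _ _)
      rw [hfsum_l]
      refine Eq.trans (Finset.prod_congr rfl fun a _ => ?_)
        (Finset.prod_pow_eq_pow_sum _ _ _)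
      rw [hfpow_l, hx, ← pow_mul,
        mul_comm (p ^ (n i0 - Nat.min (n j) (n l)) * x j l a b) ((g j a).val)]
    set N : ℕ := ∑ j : Fin k, ∑ a : Fin (m j),
        (g j a).val * (p ^ (n i0 - Nat.min (n j) (n l)) * x j l a b) with hN
    set S : ℕ := ∑ j : Fin k, ∑ a : Fin (m j),
        (if l ≤ j then (w j a).val * x j l a b else 0) with hS
    have hpS : p ∣ S := by
      rw [← ZMod.natCast_eq_zero_iff]
      have hcast : ((S : ℕ) : ZMod p) = ∑ j : Fin k, ∑ a : Fin (m j),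
          (if l ≤ j then w j a * X j l a b else 0) := by
        rw [hS]
        push_cast
        refine Finset.sum_congr rfl fun j _ => Finset.sum_congr rfl fun a _ => ?_
        by_cases hlj : l ≤ j
        · simp [hlj, hXdef, ZMod.natCast_zmod_val]
        · simp [hlj]
      rw [hcast, hker l b]
    obtain ⟨s, hs⟩ := hpS
    have hNcast : ((N : ℕ) : ZMod (p ^ n i0)) = 0 := by
      have h1 : ((N : ℕ) : ZMod (p ^ n i0)) = (p : ZMod (p ^ n i0)) ^ (n i0 - 1) *
          ((S : ℕ) : ZMod (p ^ n i0)) := by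
        rw [hN, hS]
        simp only [Nat.cast_sum]
        rw [Finset.mul_sum]
        refine Finset.sum_congr rfl fun j _ => ?_
        rw [Finset.mul_sum]
        refine Finset.sum_congr rfl fun a _ => ?_
        by_cases hlj : l ≤ j
        · rw [if_pos hlj]
          have hmin : Nat.min (n j) (n l) = n j := Nat.min_eq_left (hmono hlj)
          have hnat : (g j a).val * (p ^ (n i0 - Nat.min (n j) (n l)) * x j l a b)
              = p ^ (n i0 - 1) * ((w j a).val * x j l a b) := by
            rw [hmin, hgval]
            have hpp : p ^ (n j - 1) * p ^ (n i0 - n j) = p ^ (n i0 - 1) := by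
              rw [← pow_add]
              congr 1
              have h1 := hpos j
              have h2 := hnle j
              omega
            calc p ^ (n j - 1) * (w j a).val * (p ^ (n i0 - n j) * x j l a b)
                = (p ^ (n j - 1) * p ^ (n i0 - n j)) * ((w j a).val * x j l a b) := by ring
              _ = p ^ (n i0 - 1) * ((w j a).val * x j l a b) := by rw [hpp]
          rw [hnat]
          push_cast
          ring
        · rw [if_neg hlj]
          have hjl : j < l := lt_of_not_ge hlj
          have hmin : Nat.min (n j) (n l) = n l := Nat.min_eq_right (hstrict j l hjl).le
          have hdvd : (p ^ n i0 : ℕ) ∣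
              (g j a).val * (p ^ (n i0 - Nat.min (n j) (n l)) * x j l a b) := by
            rw [hmin, hgval]
            have hexp : n i0 ≤ (n j - 1) + (n i0 - n l) := by
              have h1 := hstrict j l hjl
              have h2 := hnle l
              have h3 := hpos l
              omega
            calc (p ^ n i0 : ℕ) ∣ p ^ ((n j - 1) + (n i0 - n l)) := pow_dvd_pow p hexp
              _ = p ^ (n j - 1) * p ^ (n i0 - n l) := pow_add p _ _
              _ ∣ p ^ (n j - 1) * (w j a).val * (p ^ (n i0 - n l) * x j l a b) := by
                  exact mul_dvd_mul (dvd_mul_right _ _) (dvd_mul_right _ _)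
          rw [Nat.cast_zero, mul_zero]
          exact (ZMod.natCast_eq_zero_iff _ _).mpr hdvd
      rw [h1, hs, Nat.cast_mul, ← mul_assoc, ← pow_succ]
      have he' : n i0 - 1 + 1 = n i0 := by have := hpos i0; omega
      rw [he', ← Nat.cast_pow, ZMod.natCast_self, zero_mul]
    obtain ⟨q, hq⟩ := (ZMod.natCast_eq_zero_iff _ _).mp hNcast
    rw [hstep, hq, pow_mul, hζ.pow_eq_one, one_pow]
  -- Step 7: conclude
  refine ⟨g, hgne, fun h => ?_⟩
  conv_lhs => rw [hdecomp h]
  rw [hfsum_r]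
  refine Finset.prod_eq_one fun j _ => ?_
  rw [hfsum_r]
  refine Finset.prod_eq_one fun b _ => ?_
  rw [hfpow_r, key j b, one_pow]
end

section
/- Let G = (Z/p^{n₁})^{m₁} × … × (Z/p^{n_k})^{m_k} with n₁ > … > n_k ≥ 1, R a domain containing a primitive p^{n₁}-th root of unity, and φ ∈ Z²(G, U(R)) with associated matrix A_φ = (A_{ij}) as above. Then the twisted group ring RG^φ has center equal to R if and only if every diagonal block A_{ii} is invertible over Z/p^{n_i}Z. -/
section aux13coc
variable {M : Type*} [CommGroup M] {G : Type*} [AddCommGroup G]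

lemma aux13_phi_zero {φ : G → G → M}
    (hφ : ∀ a b c, φ b c * φ a (b + c) = φ a b * φ (a + b) c) (hφ1 : φ 0 0 = 1) :
    (∀ a, φ a 0 = 1) ∧ (∀ a, φ 0 a = 1) := by
  have key : ∀ a c, φ 0 c = φ a 0 := by
    intro a c
    have h := hφ a 0 c
    rw [zero_add, add_zero] at h
    exact mul_right_cancel h
  have h1 : ∀ a, φ a 0 = 1 := fun a => (key a 0).symm.trans hφ1
  exact ⟨h1, fun a => (key a a).trans (h1 a)⟩

lemma aux13_beta_add_left {φ : G → G → M}
    (hφ : ∀ a b c, φ b c * φ a (b + c) = φ a b * φ (a + b) c) (a b c : G) :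
    φ (a + b) c / φ c (a + b) = (φ a c / φ c a) * (φ b c / φ c b) := by
  have E : φ c a * (φ c b * φ a (b + c)) = φ a c * (φ a b * φ c (a + b)) := by
    have h2 := hφ a c b
    rw [add_comm c b] at h2
    have h3 := hφ c a b
    rw [add_comm c a] at h3
    rw [h2]
    rw [mul_left_comm, h3, mul_left_comm]
  rw [div_mul_div_comm, div_eq_div_iff_mul_eq_mul]
  have h1 := hφ a b c
  refine mul_right_cancel (b := φ a (b + c)) ?_
  calc φ (a + b) c * (φ c a * φ c b) * φ a (b + c)
      = φ (a + b) c * (φ c a * (φ c b * φ a (b + c))) := by simp only [mul_comm, mul_left_comm, mul_assoc]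
    _ = φ (a + b) c * (φ a c * (φ a b * φ c (a + b))) := by rw [E]
    _ = (φ a c * φ c (a + b)) * (φ a b * φ (a + b) c) := by simp only [mul_comm, mul_left_comm, mul_assoc]
    _ = (φ a c * φ c (a + b)) * (φ b c * φ a (b + c)) := by rw [h1]
    _ = φ a c * φ b c * φ c (a + b) * φ a (b + c) := by simp only [mul_comm, mul_left_comm, mul_assoc]

end aux13coc

section aux13coc2
variable {M : Type*} [CommGroup M] {G : Type*} [AddCommGroup G]

lemma aux13_beta_nsmul {φ : G → G → M}
    (hφ : ∀ a b c, φ b c * φ a (b + c) = φ a b * φ (a + b) c) (hφ1 : φ 0 0 = 1)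
    (v : ℕ) (a c : G) :
    φ (v • a) c / φ c (v • a) = (φ a c / φ c a) ^ v := by
  induction v with
  | zero =>
    simp [ (aux13_phi_zero hφ hφ1).1, (aux13_phi_zero hφ hφ1).2]
  | succ t ih =>
    rw [succ_nsmul, aux13_beta_add_left hφ, ih, pow_succ]

lemma aux13_beta_sum {ι : Type*} {φ : G → G → M}
    (hφ : ∀ a b c, φ b c * φ a (b + c) = φ a b * φ (a + b) c) (hφ1 : φ 0 0 = 1)
    (t : Finset ι) (f : ι → G) (c : G) :
    φ (∑ s ∈ t, f s) c / φ c (∑ s ∈ t, f s) = ∏ s ∈ t, (φ (f s) c / φ c (f s)) := by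
  classical
  induction t using Finset.cons_induction with
  | empty => simp [ (aux13_phi_zero hφ hφ1).1, (aux13_phi_zero hφ hφ1).2]
  | cons i t hi ih =>
    rw [Finset.sum_cons, Finset.prod_cons, aux13_beta_add_left hφ, ih]

lemma aux13_beta_swap {φ : G → G → M} (a c : G) :
    φ c a / φ a c = (φ a c / φ c a)⁻¹ := by
  rw [inv_div]

end aux13coc2

lemma aux13_decomp {k : ℕ} {m : Fin k → ℕ} {N : Fin k → ℕ} [∀ i, NeZero (N i)]
    (σ : ∀ i : Fin k, Fin (m i) → ZMod (N i)) :
    σ = ∑ q : (Σ i : Fin k, Fin (m i)),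
        (σ q.1 q.2).val • Pi.single (M := fun i => Fin (m i) → ZMod (N i)) q.1 (Pi.single q.2 1) := by
  classical
  funext i a
  have h1 : ∀ x : (∀ i : Fin k, Fin (m i) → ZMod (N i)), ∀ q : (Σ i : Fin k, Fin (m i)), True := fun _ _ => trivial
  rw [Fintype.sum_apply, Fintype.sum_apply,
    Fintype.sum_eq_single (⟨i, a⟩ : Σ i : Fin k, Fin (m i))]
  · simp
  · rintro ⟨j, b⟩ hq
    simp only [Pi.smul_apply]
    by_cases hj : j = i
    · subst hj
      have hb : b ≠ a := fun h => hq (by rw [h])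
      rw [Pi.single_eq_same, Pi.single_eq_of_ne (Ne.symm hb), smul_zero]
    · rw [Pi.single_eq_of_ne (Ne.symm hj)]
      simp


lemma aux13_isUnit_zmod_pow {p e : ℕ} (hp : p.Prime) (he : 1 ≤ e) (z : ZMod (p ^ e)) :
    IsUnit z ↔ ¬ p ∣ z.val := by
  haveI : NeZero (p ^ e) := ⟨pow_ne_zero _ hp.ne_zero⟩
  constructor
  · intro h hdvd
    rw [← ZMod.natCast_rightInverse z] at h
    rw [ZMod.isUnit_iff_coprime] at h
    rw [Nat.coprime_pow_right_iff he] at h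
    exact (hp.coprime_iff_not_dvd.mp h.symm) hdvd
  · intro h
    rw [← ZMod.natCast_rightInverse z, ZMod.isUnit_iff_coprime, Nat.coprime_pow_right_iff he]
    exact (hp.coprime_iff_not_dvd.mpr h).symm

lemma aux13_matrix_unit {p e s : ℕ} (hp : p.Prime) (he : 1 ≤ e) (y : Fin s → Fin s → ℕ) :
    IsUnit (Matrix.of fun a b : Fin s => ((y a b : ℕ) : ZMod (p ^ e))) ↔
      (Matrix.of fun a b : Fin s => ((y a b : ℕ) : ZMod p)).det ≠ 0 := by
  haveI : NeZero (p ^ e) := ⟨pow_ne_zero _ hp.ne_zero⟩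
  haveI : Fact p.Prime := ⟨hp⟩
  have hdvd : p ∣ p ^ e := dvd_pow_self p (by omega)
  set f : ZMod (p ^ e) →+* ZMod p := ZMod.castHom hdvd (ZMod p)
  have hmap : (f.mapMatrix (Matrix.of fun a b : Fin s => ((y a b : ℕ) : ZMod (p ^ e))))
      = (Matrix.of fun a b : Fin s => ((y a b : ℕ) : ZMod p)) := by
    ext a b
    simp [f]
  rw [Matrix.isUnit_iff_isUnit_det, aux13_isUnit_zmod_pow hp he, ← hmap, ← RingHom.map_det]
  have : f ((Matrix.of fun a b : Fin s => ((y a b : ℕ) : ZMod (p ^ e))).det)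
      = (((Matrix.of fun a b : Fin s => ((y a b : ℕ) : ZMod (p ^ e))).det).val : ZMod p) := by
    rw [ZMod.natCast_val, ZMod.castHom_apply]
  rw [this, Ne, ZMod.natCast_eq_zero_iff]

lemma aux13_val_mul {N : ℕ} [NeZero N] (w : ℕ) (c : ZMod N) :
    ((w : ZMod N) * c).val ≡ w * c.val [MOD N] := by
  conv_lhs => rw [← ZMod.natCast_rightInverse c]
  rw [← Nat.cast_mul, ZMod.val_natCast]
  exact (Nat.mod_modEq _ _)

lemma aux13_modEq_sum {ι : Type*} (s : Finset ι) (f g : ι → ℕ) (N : ℕ)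
    (h : ∀ i ∈ s, f i ≡ g i [MOD N]) : (∑ i ∈ s, f i) ≡ (∑ i ∈ s, g i) [MOD N] := by
  induction s using Finset.cons_induction with
  | empty => rfl
  | cons i t hi ih =>
    rw [Finset.sum_cons, Finset.sum_cons]
    exact Nat.ModEq.add (h i (Finset.mem_cons_self i t))
      (ih fun j hj => h j (Finset.mem_cons_of_mem hj))

lemma aux13_val_mul' {N : ℕ} [NeZero N] (w : ℕ) (c : ZMod N) :
    ((w : ZMod N) * c).val ≡ w * c.val [MOD N] := by
  conv_lhs => rw [← ZMod.natCast_rightInverse c]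
  rw [← Nat.cast_mul, ZMod.val_natCast]
  exact (Nat.mod_modEq _ _)

lemma aux13_heart_mpr {p k : ℕ} (hp : p.Prime) {n m : Fin k → ℕ} (hpos : ∀ i, 1 ≤ n i)
    (hstrict : ∀ i j : Fin k, i < j → n j < n i)
    (x : (i j : Fin k) → Fin (m i) → Fin (m j) → ℕ)
    (hunit : ∀ i, IsUnit (Matrix.of fun a b : Fin (m i) => ((x i i a b : ℕ) : ZMod (p ^ n i))))
    (σ : ∀ i : Fin k, Fin (m i) → ZMod (p ^ n i))
    (hσ : ∀ (l : Fin k) (b : Fin (m l)),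
      (((∑ q : Σ i : Fin k, Fin (m i),
          p ^ (n l - Nat.min (n q.1) (n l)) * x q.1 l q.2 b * (σ q.1 q.2).val : ℕ)) :
          ZMod (p ^ n l)) = 0) :
    σ = 0 := by
  classical
  haveI : ∀ i : Fin k, NeZero (p ^ n i) := fun i => ⟨pow_ne_zero _ hp.ne_zero⟩
  haveI : Fact p.Prime := ⟨hp⟩
  have hcastpow : ∀ (i : Fin k) (t : ℕ), ((p : ZMod (p ^ n i)))^t = ((p^t : ℕ) : ZMod (p ^ n i)) := by
    intro i t; push_cast; ring
  have main : ∀ t : ℕ, ∀ (i : Fin k) (a : Fin (m i)), ((p : ZMod (p ^ n i)) ^ t) ∣ σ i a := by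
    intro t
    induction t with
    | zero => intro i a; simpa using one_dvd _
    | succ t ih =>
      by_contra hcon
      push_neg at hcon
      set bad : Finset (Fin k) :=
        Finset.univ.filter (fun i => ¬ ∀ a, ((p : ZMod (p ^ n i)) ^ (t+1)) ∣ σ i a) with hbaddef
      have hbadne : bad.Nonempty := by
        obtain ⟨i, a, hia⟩ := hcon
        exact ⟨i, by simp [hbaddef]; exact ⟨a, hia⟩⟩
      set j := bad.min' hbadne with hjdef
      have hjbad : j ∈ bad := bad.min'_mem hbadne
      have hj : ∃ a, ¬ ((p : ZMod (p ^ n j)) ^ (t+1)) ∣ σ j a := by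
        have := Finset.mem_filter.mp hjbad
        push_neg at this
        exact this.2
      have hlt : ∀ i, i < j → ∀ a, ((p : ZMod (p ^ n i)) ^ (t+1)) ∣ σ i a := by
        intro i hij a
        by_contra hnd
        have : i ∈ bad := by simp [hbaddef]; exact ⟨a, hnd⟩
        exact absurd (bad.min'_le i this) (not_le.mpr hij)
      have htn : t + 1 ≤ n j := by
        by_contra hle
        push_neg at hle
        obtain ⟨a, ha⟩ := hj
        have hz : ((p : ZMod (p ^ n j)) ^ t) = 0 := by
          rw [hcastpow, ZMod.natCast_eq_zero_iff]
          exact pow_dvd_pow p (by omega)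
        have := ih j a
        rw [hz, zero_dvd_iff] at this
        exact ha (by rw [this]; exact dvd_zero _)
      -- decompose σ i a
      have hdec : ∀ (i : Fin k) (a : Fin (m i)), ∃ c : ZMod (p ^ n i),
          σ i a = ((p ^ (if i < j then t + 1 else t) : ℕ) : ZMod (p ^ n i)) * c := by
        intro i a
        by_cases hij : i < j
        · obtain ⟨c, hc⟩ := hlt i hij a
          exact ⟨c, by rw [if_pos hij, ← hcastpow]; exact hc⟩
        · obtain ⟨c, hc⟩ := ih i a
          exact ⟨c, by rw [if_neg hij, ← hcastpow]; exact hc⟩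
      choose c hc using hdec
      -- val congruence
      have hval : ∀ (i : Fin k) (a : Fin (m i)),
          (σ i a).val ≡ p ^ (if i < j then t + 1 else t) * (c i a).val [MOD p ^ n i] := by
        intro i a
        rw [hc i a]
        exact aux13_val_mul' _ _
      obtain ⟨a₀, ha₀⟩ := hj
      -- for each b, derive the mod-p equation
      have hkey : ∀ b : Fin (m j), p ∣ (∑ a : Fin (m j), x j j a b * (c j a).val) := by
        intro b
        have hdvdS : p ^ (t+1) ∣ (∑ q : Σ i : Fin k, Fin (m i),
            p ^ (n j - Nat.min (n q.1) (n j)) * x q.1 j q.2 b * (σ q.1 q.2).val) := by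
          have h0 := hσ j b
          rw [ZMod.natCast_eq_zero_iff] at h0
          exact dvd_trans (pow_dvd_pow p htn) h0
        have hsplit : (∑ q : Σ i : Fin k, Fin (m i),
            p ^ (n j - Nat.min (n q.1) (n j)) * x q.1 j q.2 b * (σ q.1 q.2).val)
            = ∑ i : Fin k, ∑ a : Fin (m i),
              p ^ (n j - Nat.min (n i) (n j)) * x i j a b * (σ i a).val := by
          rw [Finset.sum_sigma' Finset.univ (fun _ => Finset.univ)
            (fun i a => p ^ (n j - Nat.min (n i) (n j)) * x i j a b * (σ i a).val),
            Finset.univ_sigma_univ]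
        have hcong : (∑ i : Fin k, ∑ a : Fin (m i),
              p ^ (n j - Nat.min (n i) (n j)) * x i j a b * (σ i a).val)
            ≡ (∑ i : Fin k, if i = j then p ^ t * (∑ a : Fin (m j), x j j a b * (c j a).val) else 0)
              [MOD p ^ (t+1)] := by
          apply aux13_modEq_sum
          intro i _
          rcases lt_trichotomy i j with hij | hij | hij
          · -- i < j : each term ≡ 0
            rw [if_neg (Fin.ne_of_lt hij)]
            have : (∑ a : Fin (m i),
                p ^ (n j - Nat.min (n i) (n j)) * x i j a b * (σ i a).val) ≡
                (∑ _a : Fin (m i), 0) [MOD p ^ (t+1)] := by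
              apply aux13_modEq_sum
              intro a _
              have h1 := hval i a
              rw [if_pos hij] at h1
              have h2 : (p ^ (n j - Nat.min (n i) (n j)) * x i j a b) * (σ i a).val ≡
                  (p ^ (n j - Nat.min (n i) (n j)) * x i j a b) * (p ^ (t+1) * (c i a).val)
                  [MOD (p ^ (n j - Nat.min (n i) (n j)) * x i j a b) * p ^ n i] :=
                Nat.ModEq.mul_left' _ h1
              have h3 : (p:ℕ) ^ (t+1) ∣ (p ^ (n j - Nat.min (n i) (n j)) * x i j a b) * p ^ n i := by
                apply Dvd.dvd.mul_left
                exact pow_dvd_pow p (by have := hstrict i j hij; omega)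
              have h4 := Nat.ModEq.of_dvd h3 h2
              refine h4.trans ?_
              rw [Nat.modEq_zero_iff_dvd]
              exact Dvd.dvd.mul_left (Dvd.dvd.mul_right (pow_dvd_pow p (le_refl _)) _) _
            simpa using this
          · -- i = j
            subst hij
            rw [if_pos rfl, Finset.mul_sum]
            apply aux13_modEq_sum
            intro a _
            have h1 := hval j a
            rw [if_neg (lt_irrefl j)] at h1
            have h1' := Nat.ModEq.of_dvd (pow_dvd_pow p htn) h1
            have hmm : n j - Nat.min (n j) (n j) = 0 := by
              have h : Nat.min (n j) (n j) = min (n j) (n j) := rfl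
              rw [h]; omega
            rw [hmm, pow_zero, one_mul]
            calc (x j j a b) * (σ j a).val
                ≡ (x j j a b) * (p ^ t * (c j a).val) [MOD p ^ (t+1)] := h1'.mul_left _
              _ = p ^ t * (x j j a b * (c j a).val) := by ring
          · -- i > j : term ≡ 0
            rw [if_neg (Fin.ne_of_gt hij)]
            have : (∑ a : Fin (m i),
                p ^ (n j - Nat.min (n i) (n j)) * x i j a b * (σ i a).val) ≡
                (∑ _a : Fin (m i), 0) [MOD p ^ (t+1)] := by
              apply aux13_modEq_sum
              intro a _
              have h1 := hval i a
              rw [if_neg (not_lt.mpr (le_of_lt hij))] at h1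
              have h2 : (p ^ (n j - Nat.min (n i) (n j)) * x i j a b) * (σ i a).val ≡
                  (p ^ (n j - Nat.min (n i) (n j)) * x i j a b) * (p ^ t * (c i a).val)
                  [MOD (p ^ (n j - Nat.min (n i) (n j)) * x i j a b) * p ^ n i] :=
                Nat.ModEq.mul_left' _ h1
              have hni : n i < n j := hstrict j i hij
              have hmin : Nat.min (n i) (n j) = n i := Nat.min_eq_left (le_of_lt hni)
              have h3 : (p:ℕ) ^ (t+1) ∣ (p ^ (n j - Nat.min (n i) (n j)) * x i j a b) * p ^ n i := by
                rw [hmin, mul_assoc, mul_comm (x i j a b), ← mul_assoc, ← pow_add]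
                have : n j - n i + n i = n j := by omega
                rw [this]
                exact Dvd.dvd.mul_right (pow_dvd_pow p htn) _
              have h4 := Nat.ModEq.of_dvd h3 h2
              refine h4.trans ?_
              rw [Nat.modEq_zero_iff_dvd]
              rw [hmin]
              have : (p ^ (n j - n i) * x i j a b) * (p ^ t * (c i a).val)
                  = p ^ (n j - n i + t) * (x i j a b * (c i a).val) := by
                rw [pow_add]; ring
              rw [this]
              exact Dvd.dvd.mul_right (pow_dvd_pow p (by omega)) _
            simpa using this
        rw [hsplit] at hdvdS
        have hfin : (p:ℕ) ^ (t+1) ∣ p ^ t * (∑ a : Fin (m j), x j j a b * (c j a).val) := by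
          have h5 := (Nat.modEq_zero_iff_dvd.mpr hdvdS).symm.trans hcong
          rw [Finset.sum_ite_eq' Finset.univ j
            (fun _ => p ^ t * (∑ a : Fin (m j), x j j a b * (c j a).val)),
            if_pos (Finset.mem_univ j)] at h5
          exact Nat.modEq_zero_iff_dvd.mp h5.symm
        rw [pow_succ] at hfin
        exact (Nat.mul_dvd_mul_iff_left (pow_pos hp.pos t)).mp hfin
      -- linear algebra over ZMod p
      have hdet : (Matrix.of fun a b : Fin (m j) => ((x j j a b : ℕ) : ZMod p)).det ≠ 0 := by
        have := hunit j
        rwa [aux13_matrix_unit hp (hpos j)] at this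
      have hv : (fun a : Fin (m j) => (((c j a).val : ℕ) : ZMod p)) = 0 := by
        by_contra hvne
        apply hdet
        rw [← Matrix.exists_vecMul_eq_zero_iff]
        refine ⟨_, hvne, ?_⟩
        funext b
        have := hkey b
        rw [← ZMod.natCast_eq_zero_iff] at this
        push_cast at this
        rw [Matrix.vecMul]
        simpa [dotProduct, mul_comm] using this
      -- conclude p^(t+1) ∣ σ j a for all a, contradiction
      apply ha₀
      have hpc : p ∣ (c j a₀).val :=
        (ZMod.natCast_eq_zero_iff _ _).mp (congrFun hv a₀)
      obtain ⟨d, hd⟩ := hpc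
      refine ⟨(d : ZMod (p ^ n j)), ?_⟩
      rw [hc j a₀, if_neg (lt_irrefl j)]
      have : (c j a₀) = ((p * d : ℕ) : ZMod (p ^ n j)) := by
        rw [← hd, ZMod.natCast_rightInverse (c j a₀)]
      rw [this]
      push_cast
      ring
  funext i a
  have := main (n i) i a
  rw [hcastpow, ZMod.natCast_self, zero_dvd_iff] at this
  simpa using this

lemma aux13_heart_mp {p k : ℕ} (hp : p.Prime) {n m : Fin k → ℕ} (hpos : ∀ i, 1 ≤ n i)
    (hstrict : ∀ i j : Fin k, i < j → n j < n i)
    (x : (i j : Fin k) → Fin (m i) → Fin (m j) → ℕ)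
    (hnot : ¬ ∀ i, IsUnit (Matrix.of fun a b : Fin (m i) => ((x i i a b : ℕ) : ZMod (p ^ n i)))) :
    ∃ σ : ∀ i : Fin k, Fin (m i) → ZMod (p ^ n i), σ ≠ 0 ∧
      ∀ (l : Fin k) (b : Fin (m l)),
        (((∑ q : Σ i : Fin k, Fin (m i),
            p ^ (n l - Nat.min (n q.1) (n l)) * x q.1 l q.2 b * (σ q.1 q.2).val : ℕ)) :
            ZMod (p ^ n l)) = 0 := by
  classical
  haveI : ∀ i : Fin k, NeZero (p ^ n i) := fun i => ⟨pow_ne_zero _ hp.ne_zero⟩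
  haveI : Fact p.Prime := ⟨hp⟩
  haveI : NeZero p := ⟨hp.ne_zero⟩
  push_neg at hnot
  set bad : Finset (Fin k) := Finset.univ.filter
    (fun i => ¬ IsUnit (Matrix.of fun a b : Fin (m i) => ((x i i a b : ℕ) : ZMod (p ^ n i))))
    with hbaddef
  have hbadne : bad.Nonempty := by
    obtain ⟨i, hi⟩ := hnot
    exact ⟨i, by simp only [hbaddef, Finset.mem_filter, Finset.mem_univ, true_and]; exact hi⟩
  set j := bad.min' hbadne with hjdef
  have hjbad : ¬ IsUnit (Matrix.of fun a b : Fin (m j) => ((x j j a b : ℕ) : ZMod (p ^ n j))) :=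
    (Finset.mem_filter.mp (bad.min'_mem hbadne)).2
  have hminimal : ∀ i, i < j →
      IsUnit (Matrix.of fun a b : Fin (m i) => ((x i i a b : ℕ) : ZMod (p ^ n i))) := by
    intro i hij
    by_contra hni
    exact absurd (bad.min'_le i
      (by simp only [hbaddef, Finset.mem_filter, Finset.mem_univ, true_and]; exact hni))
      (not_le.mpr hij)
  have hdet0 : (Matrix.of fun a b : Fin (m j) => ((x j j a b : ℕ) : ZMod p)).det = 0 := by
    by_contra hne
    exact hjbad ((aux13_matrix_unit hp (hpos j) _).mpr hne)
  obtain ⟨τ, hτne, hτ⟩ := Matrix.exists_vecMul_eq_zero_iff.mpr hdet0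
  have claim : ∀ d : ℕ, ∃ μ : ∀ i : Fin k, Fin (m i) → ZMod p,
      μ j = τ ∧ (∀ i, j < i → μ i = 0) ∧
      ∀ l : Fin k, j.val - d ≤ l.val → ∀ b : Fin (m l),
        (∑ q : Σ i : Fin k, Fin (m i),
          (if l ≤ q.1 then μ q.1 q.2 * ((x q.1 l q.2 b : ℕ) : ZMod p) else 0)) = 0 := by
    intro d
    induction d with
    | zero =>
      refine ⟨Pi.single j τ, Pi.single_eq_same (M := fun i => Fin (m i) → ZMod p) j τ,
        fun i hji => Pi.single_eq_of_ne (M := fun i => Fin (m i) → ZMod p) (Ne.symm (Fin.ne_of_lt hji)) τ, ?_⟩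
      intro l hl b
      have hjl : j ≤ l := by
        rw [Fin.le_def]; omega
      rw [← Finset.univ_sigma_univ, ← Finset.sum_sigma' Finset.univ (fun _ => Finset.univ)
        (fun i a => (if l ≤ i then Pi.single (M := fun i => Fin (m i) → ZMod p) j τ i a
          * ((x i l a b : ℕ) : ZMod p) else 0))]
      apply Finset.sum_eq_zero
      intro i _
      by_cases hij : i = j
      · subst hij
        rcases eq_or_lt_of_le hjl with heq | hlt2
        · subst heq
          have h0 := congrFun hτ b
          simp only [Matrix.vecMul, dotProduct, Matrix.of_apply, Pi.zero_apply] at h0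
          simp only [le_refl, if_true, Pi.single_eq_same]
          exact h0
        · apply Finset.sum_eq_zero
          intro a _
          rw [if_neg (not_le.mpr hlt2)]
      · apply Finset.sum_eq_zero
        intro a _
        by_cases hle : l ≤ i
        · rw [if_pos hle, Pi.single_eq_of_ne hij, Pi.zero_apply, zero_mul]
        · rw [if_neg hle]
    | succ d ihd =>
      obtain ⟨μ, hμj, hμgt, hμeq⟩ := ihd
      by_cases hd : j.val ≤ d
      · exact ⟨μ, hμj, hμgt, fun l hl b => hμeq l (by omega) b⟩
      · push_neg at hd
        have hl'lt : j.val - (d+1) < k := by omega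
        set l' : Fin k := ⟨j.val - (d+1), hl'lt⟩ with hl'def
        have hl'j : l' < j := by
          rw [Fin.lt_def]; simp only [hl'def]; omega
        have hdet' : (Matrix.of fun a b : Fin (m l') => ((x l' l' a b : ℕ) : ZMod p)).det ≠ 0 := by
          have := hminimal l' hl'j
          rwa [aux13_matrix_unit hp (hpos l')] at this
        set M' : Matrix (Fin (m l')) (Fin (m l')) (ZMod p) :=
          Matrix.of fun a b : Fin (m l') => ((x l' l' a b : ℕ) : ZMod p) with hM'def
        set T : Fin (m l') → ZMod p := fun b => ∑ q : Σ i : Fin k, Fin (m i),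
          (if l' < q.1 then μ q.1 q.2 * ((x q.1 l' q.2 b : ℕ) : ZMod p) else 0) with hTdef
        set w : Fin (m l') → ZMod p := Matrix.vecMul (-T) M'⁻¹ with hwdef
        have hw : Matrix.vecMul w M' = -T := by
          rw [hwdef, Matrix.vecMul_vecMul, Matrix.nonsing_inv_mul M' (isUnit_iff_ne_zero.mpr hdet'),
            Matrix.vecMul_one]
        set μ' := Function.update μ l' w with hμ'def
        refine ⟨μ', ?_, ?_, ?_⟩
        · rw [hμ'def, Function.update_of_ne (Fin.ne_of_gt hl'j) w μ]
          exact hμj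
        · intro i hji
          rw [hμ'def, Function.update_of_ne (Fin.ne_of_gt (lt_trans hl'j hji)) w μ]
          exact hμgt i hji
        · intro l hl b
          by_cases hll' : l = l'
          · subst hll'
            rw [← Finset.univ_sigma_univ, ← Finset.sum_sigma' Finset.univ (fun _ => Finset.univ)
              (fun i a => (if l' ≤ i then μ' i a * ((x i l' a b : ℕ) : ZMod p) else 0))]
            rw [← Finset.add_sum_erase _ _ (Finset.mem_univ l')]
            have hGl' : (∑ a : Fin (m l'),
                (if l' ≤ l' then μ' l' a * ((x l' l' a b : ℕ) : ZMod p) else 0)) = - T b := by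
              simp only [le_refl, if_true, hμ'def, Function.update_self]
              have h1 := congrFun hw b
              simp only [Matrix.vecMul, dotProduct, hM'def, Matrix.of_apply,
                Pi.neg_apply] at h1
              exact h1
            have hTb : (∑ i ∈ Finset.univ.erase l', ∑ a : Fin (m i),
                (if l' ≤ i then μ' i a * ((x i l' a b : ℕ) : ZMod p) else 0)) = T b := by
              have h2 : T b = ∑ i : Fin k, ∑ a : Fin (m i),
                  (if l' < i then μ i a * ((x i l' a b : ℕ) : ZMod p) else 0) := by
                rw [hTdef]
                conv_rhs => rw [Finset.sum_sigma' Finset.univ (fun _ => Finset.univ)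
                  (fun i a => (if l' < i then μ i a * ((x i l' a b : ℕ) : ZMod p) else 0))]
                rw [Finset.univ_sigma_univ]
              rw [h2, ← Finset.add_sum_erase _ _ (Finset.mem_univ l')]
              have h3 : (∑ a : Fin (m l'),
                  (if l' < l' then μ l' a * ((x l' l' a b : ℕ) : ZMod p) else 0)) = 0 := by
                simp
              rw [h3, zero_add]
              apply Finset.sum_congr rfl
              intro i hi
              have hne : i ≠ l' := (Finset.mem_erase.mp hi).1
              apply Finset.sum_congr rfl
              intro a _
              by_cases hlt : l' < i
              · rw [if_pos hlt, if_pos (le_of_lt hlt), hμ'def,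
                  Function.update_of_ne hne w μ]
              · rw [if_neg hlt, if_neg (fun hle => hlt (lt_of_le_of_ne hle (Ne.symm hne)))]
            rw [hGl', hTb, neg_add_cancel]
          · have hl2 : l' < l := by
              rw [Fin.lt_def]
              have : l.val ≠ l'.val := fun h => hll' (Fin.ext h)
              simp only [hl'def] at this ⊢
              omega
            have : (∑ q : Σ i : Fin k, Fin (m i),
                (if l ≤ q.1 then μ' q.1 q.2 * ((x q.1 l q.2 b : ℕ) : ZMod p) else 0))
                = (∑ q : Σ i : Fin k, Fin (m i),
                (if l ≤ q.1 then μ q.1 q.2 * ((x q.1 l q.2 b : ℕ) : ZMod p) else 0)) := by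
              apply Finset.sum_congr rfl
              intro q _
              by_cases hlq : l ≤ q.1
              · rw [if_pos hlq, if_pos hlq, hμ'def,
                  Function.update_of_ne (Fin.ne_of_gt (lt_of_lt_of_le hl2 hlq)) w μ]
              · rw [if_neg hlq, if_neg hlq]
            rw [this]
            exact hμeq l (by
              have : l.val ≠ l'.val := fun h => hll' (Fin.ext h)
              simp only [hl'def] at this
              omega) b
  obtain ⟨μ, hμj, _hgt, hμeq⟩ := claim j.val
  have hμeq' : ∀ (l : Fin k) (b : Fin (m l)),
      (∑ q : Σ i : Fin k, Fin (m i),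
        (if l ≤ q.1 then μ q.1 q.2 * ((x q.1 l q.2 b : ℕ) : ZMod p) else 0)) = 0 :=
    fun l b => hμeq l (by omega) b
  refine ⟨fun i a => (((μ i a).val * p ^ (n i - 1) : ℕ) : ZMod (p ^ n i)), ?_, ?_⟩
  · -- nonzero
    obtain ⟨a₀, hτa₀⟩ := Function.ne_iff.mp hτne
    intro h0
    have h1 : ((((μ j a₀).val * p ^ (n j - 1) : ℕ)) : ZMod (p ^ n j)) = 0 :=
      congrFun (congrFun h0 j) a₀
    rw [ZMod.natCast_eq_zero_iff] at h1
    have hvlt : (μ j a₀).val < p := ZMod.val_lt _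
    have hvne : (μ j a₀).val ≠ 0 := by
      rw [hμj]
      intro hz
      exact hτa₀ ((ZMod.val_eq_zero (τ a₀)).mp hz)
    have hle := Nat.le_of_dvd (Nat.mul_pos (Nat.pos_of_ne_zero hvne) (pow_pos hp.pos _)) h1
    have hnj : n j - 1 + 1 = n j := by have := hpos j; omega
    rw [← hnj, pow_succ] at hle
    have hlt2 : (μ j a₀).val * p ^ (n j - 1) < p ^ (n j - 1) * p := by
      nlinarith [pow_pos hp.pos (n j - 1)]
    exact absurd hle (not_le.mpr hlt2)
  · -- the radical equations
    intro l b
    rw [ZMod.natCast_eq_zero_iff]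
    have hU : (p:ℕ) ∣ (∑ q : Σ i : Fin k, Fin (m i),
        (if l ≤ q.1 then (μ q.1 q.2).val * x q.1 l q.2 b else 0)) := by
      rw [← ZMod.natCast_eq_zero_iff, Nat.cast_sum, ← hμeq' l b]
      apply Finset.sum_congr rfl
      intro q _
      by_cases hlq : l ≤ q.1
      · rw [if_pos hlq]
        rw [if_pos hlq]
        push_cast
        rw [ZMod.natCast_rightInverse (μ q.1 q.2)]
      · rw [if_neg hlq, if_neg hlq, Nat.cast_zero]
    obtain ⟨U', hU'⟩ := hU
    have hcong : (∑ q : Σ i : Fin k, Fin (m i),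
        p ^ (n l - Nat.min (n q.1) (n l)) * x q.1 l q.2 b *
          ((((μ q.1 q.2).val * p ^ (n q.1 - 1) : ℕ) : ZMod (p ^ n q.1))).val)
        ≡ (∑ q : Σ i : Fin k, Fin (m i),
          p ^ (n l - 1) * (if l ≤ q.1 then (μ q.1 q.2).val * x q.1 l q.2 b else 0))
          [MOD p ^ n l] := by
      apply aux13_modEq_sum
      rintro ⟨i, a⟩ _
      have hval : ((((μ i a).val * p ^ (n i - 1) : ℕ) : ZMod (p ^ n i))).val
          ≡ (μ i a).val * p ^ (n i - 1) [MOD p ^ n i] := by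
        rw [ZMod.val_natCast]; exact Nat.mod_modEq _ _
      have h2 := Nat.ModEq.mul_left' (c := p ^ (n l - Nat.min (n i) (n l)) * x i l a b) hval
      have hminle : Nat.min (n i) (n l) ≤ n i := Nat.min_le_left _ _
      have h3 : (p:ℕ) ^ n l ∣ (p ^ (n l - Nat.min (n i) (n l)) * x i l a b) * p ^ n i := by
        rw [mul_assoc, mul_comm (x i l a b), ← mul_assoc, ← pow_add]
        exact Dvd.dvd.mul_right (pow_dvd_pow p (by omega)) _
      have h4 := Nat.ModEq.of_dvd h3 h2
      refine h4.trans ?_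
      by_cases hli : l ≤ i
      · rw [if_pos hli]
        rcases eq_or_lt_of_le hli with heq | hlt
        · subst heq
          have hmin : Nat.min (n l) (n l) = n l := min_self (n l)
          rw [hmin, Nat.sub_self, pow_zero, one_mul]
          have : x l l a b * ((μ l a).val * p ^ (n l - 1))
              = p ^ (n l - 1) * ((μ l a).val * x l l a b) := by ring
          rw [this]
        · have hni : n i < n l := hstrict l i hlt
          have hmin : Nat.min (n i) (n l) = n i := Nat.min_eq_left (le_of_lt hni)
          rw [hmin]
          have hexp : (n l - n i) + (n i - 1) = n l - 1 := by
            have := hpos i; omega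
          have : p ^ (n l - n i) * x i l a b * ((μ i a).val * p ^ (n i - 1))
              = p ^ ((n l - n i) + (n i - 1)) * ((μ i a).val * x i l a b) := by
            rw [pow_add]; ring
          rw [this, hexp]
      · rw [if_neg hli, mul_zero]
        push_neg at hli
        have hni : n l < n i := hstrict i l hli
        have hmin : Nat.min (n i) (n l) = n l := Nat.min_eq_right (le_of_lt hni)
        rw [hmin, Nat.sub_self, pow_zero, one_mul, Nat.modEq_zero_iff_dvd]
        have : x i l a b * ((μ i a).val * p ^ (n i - 1))
            = p ^ (n i - 1) * (x i l a b * (μ i a).val) := by ring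
        rw [this]
        exact Dvd.dvd.mul_right (pow_dvd_pow p (by omega)) _
    have hrhs : (∑ q : Σ i : Fin k, Fin (m i),
        p ^ (n l - 1) * (if l ≤ q.1 then (μ q.1 q.2).val * x q.1 l q.2 b else 0))
        = p ^ n l * U' := by
      rw [← Finset.mul_sum, hU', ← mul_assoc, ← pow_succ]
      have : n l - 1 + 1 = n l := by have := hpos l; omega
      rw [this]
    rw [hrhs] at hcong
    exact (Nat.modEq_zero_iff_dvd).mp (hcong.trans (Nat.modEq_zero_iff_dvd.mpr ⟨U', rfl⟩))

theorem stmt13 (R : Type*) [CommRing R] [IsDomain R]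
    (p : ℕ) (hp : p.Prime) (k : ℕ) (hk : 0 < k)
    (n : Fin k → ℕ) (hpos : ∀ i, 1 ≤ n i)
    (hstrict : ∀ i j : Fin k, i < j → n j < n i)
    (m : Fin k → ℕ)
    (ζ : Rˣ) (hζ : IsPrimitiveRoot ζ (p ^ n ⟨0, hk⟩))
    (φ : (∀ i : Fin k, Fin (m i) → ZMod (p ^ n i)) →
         (∀ i : Fin k, Fin (m i) → ZMod (p ^ n i)) → Rˣ)
    (hφ : ∀ a b c, φ b c * φ a (b + c) = φ a b * φ (a + b) c)
    (hφ1 : φ 0 0 = 1)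
    (A : Type*) [Ring A] [Algebra R A]
    (u : Module.Basis (∀ i : Fin k, Fin (m i) → ZMod (p ^ n i)) R A)
    (hmul : ∀ σ τ, u σ * u τ = ((φ σ τ : Rˣ) : R) • u (σ + τ))
    (e : ∀ i : Fin k, Fin (m i) → (∀ i : Fin k, Fin (m i) → ZMod (p ^ n i)))
    (he : ∀ i a, e i a = Pi.single i (Pi.single a 1))
    (x : (i : Fin k) → (j : Fin k) → Fin (m i) → Fin (m j) → ℕ)
    (hx : ∀ i j a b, φ (e i a) (e j b) * (φ (e j b) (e i a))⁻¹
        = ζ ^ (p ^ (n ⟨0, hk⟩ - Nat.min (n i) (n j)) * x i j a b)) :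
    (Subring.center A : Set A) = Set.range (fun r : R => r • u 0) ↔
      ∀ i : Fin k,
        IsUnit (Matrix.of fun a b : Fin (m i) => ((x i i a b : ℕ) : ZMod (p ^ n i))) := by
  classical
  haveI hNZ : ∀ i : Fin k, NeZero (p ^ n i) := fun i => ⟨pow_ne_zero _ hp.ne_zero⟩
  set n0 : ℕ := n ⟨0, hk⟩ with hn0def
  have hφz := aux13_phi_zero hφ hφ1
  have hn0 : ∀ l : Fin k, n l ≤ n0 := by
    intro l
    rcases Nat.eq_zero_or_pos l.val with h | h
    · have : l = ⟨0, hk⟩ := Fin.ext h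
      rw [this]
    · exact le_of_lt (hstrict ⟨0, hk⟩ l (by rw [Fin.lt_def]; exact h))
  -- decomposition into generators
  have hdec : ∀ σ : (∀ i : Fin k, Fin (m i) → ZMod (p ^ n i)),
      σ = ∑ q : Σ i : Fin k, Fin (m i), (σ q.1 q.2).val • e q.1 q.2 := by
    intro σ
    calc σ = ∑ q : Σ i : Fin k, Fin (m i),
        (σ q.1 q.2).val • Pi.single (M := fun i => Fin (m i) → ZMod (p ^ n i)) q.1
          (Pi.single q.2 1) := aux13_decomp σ
      _ = ∑ q : Σ i : Fin k, Fin (m i), (σ q.1 q.2).val • e q.1 q.2 := by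
          apply Finset.sum_congr rfl
          intro q _
          rw [he]
  -- beta on generators
  have hβval : ∀ (σ : ∀ i : Fin k, Fin (m i) → ZMod (p ^ n i)) (l : Fin k) (b : Fin (m l)),
      φ σ (e l b) / φ (e l b) σ
        = ζ ^ (∑ q : Σ i : Fin k, Fin (m i),
            p ^ (n0 - Nat.min (n q.1) (n l)) * x q.1 l q.2 b * (σ q.1 q.2).val) := by
    intro σ l b
    have hsum := aux13_beta_sum hφ hφ1 Finset.univ
      (fun q : Σ i : Fin k, Fin (m i) => (σ q.1 q.2).val • e q.1 q.2) (e l b)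
    rw [← hdec σ] at hsum
    rw [hsum]
    calc (∏ q : Σ i : Fin k, Fin (m i),
          (φ ((σ q.1 q.2).val • e q.1 q.2) (e l b) / φ (e l b) ((σ q.1 q.2).val • e q.1 q.2)))
        = ∏ q : Σ i : Fin k, Fin (m i),
          ζ ^ (p ^ (n0 - Nat.min (n q.1) (n l)) * x q.1 l q.2 b * (σ q.1 q.2).val) := by
          apply Finset.prod_congr rfl
          intro q _
          rw [aux13_beta_nsmul hφ hφ1, div_eq_mul_inv, hx q.1 l q.2 b, ← pow_mul]
      _ = ζ ^ (∑ q : Σ i : Fin k, Fin (m i),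
            p ^ (n0 - Nat.min (n q.1) (n l)) * x q.1 l q.2 b * (σ q.1 q.2).val) :=
          Finset.prod_pow_eq_pow_sum _ _ _
  -- reduction to generators
  have hβgen : ∀ σ : (∀ i : Fin k, Fin (m i) → ZMod (p ^ n i)),
      (∀ τ, φ σ τ = φ τ σ) ↔
      (∀ (l : Fin k) (b : Fin (m l)), φ σ (e l b) = φ (e l b) σ) := by
    intro σ
    constructor
    · intro h l b; exact h (e l b)
    · intro h τ
      have hsum := aux13_beta_sum hφ hφ1 Finset.univ
        (fun q : Σ i : Fin k, Fin (m i) => (τ q.1 q.2).val • e q.1 q.2) σ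
      rw [← hdec τ] at hsum
      have hprod1 : (∏ q : Σ i : Fin k, Fin (m i),
          (φ ((τ q.1 q.2).val • e q.1 q.2) σ / φ σ ((τ q.1 q.2).val • e q.1 q.2))) = 1 := by
        apply Finset.prod_eq_one
        intro q _
        rw [aux13_beta_nsmul hφ hφ1, div_eq_one.mpr (h q.1 q.2).symm, one_pow]
      exact (div_eq_one.mp (hsum.trans hprod1)).symm
  -- arithmetic bridge
  have hbridge : ∀ (σ : ∀ i : Fin k, Fin (m i) → ZMod (p ^ n i)) (l : Fin k) (b : Fin (m l)),
      ((p:ℕ) ^ n0 ∣ (∑ q : Σ i : Fin k, Fin (m i),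
          p ^ (n0 - Nat.min (n q.1) (n l)) * x q.1 l q.2 b * (σ q.1 q.2).val))
      ↔ (((∑ q : Σ i : Fin k, Fin (m i),
          p ^ (n l - Nat.min (n q.1) (n l)) * x q.1 l q.2 b * (σ q.1 q.2).val : ℕ)) :
          ZMod (p ^ n l)) = 0 := by
    intro σ l b
    have hfact : ∀ q : Σ i : Fin k, Fin (m i),
        p ^ (n0 - Nat.min (n q.1) (n l)) * x q.1 l q.2 b * (σ q.1 q.2).val
        = p ^ (n0 - n l) *
          (p ^ (n l - Nat.min (n q.1) (n l)) * x q.1 l q.2 b * (σ q.1 q.2).val) := by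
      intro q
      have h1 : Nat.min (n q.1) (n l) ≤ n l := Nat.min_le_right _ _
      have h2 : n l ≤ n0 := hn0 l
      have h3 : n0 - Nat.min (n q.1) (n l)
          = (n0 - n l) + (n l - Nat.min (n q.1) (n l)) := by
        generalize hM : Nat.min (n q.1) (n l) = M at h1 ⊢
        omega
      rw [h3, pow_add]
      ring
    rw [Finset.sum_congr rfl (fun q _ => hfact q), ← Finset.mul_sum]
    have hsplit : (p:ℕ) ^ n0 = p ^ (n0 - n l) * p ^ (n l) := by
      rw [← pow_add]
      congr 1
      have h2 := hn0 l
      omega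
    rw [hsplit, Nat.mul_dvd_mul_iff_left (pow_pos hp.pos _)]
    rw [ZMod.natCast_eq_zero_iff]
  -- combined radical condition
  have hrad : ∀ σ : (∀ i : Fin k, Fin (m i) → ZMod (p ^ n i)),
      (∀ τ, φ σ τ = φ τ σ) ↔
      (∀ (l : Fin k) (b : Fin (m l)),
        (((∑ q : Σ i : Fin k, Fin (m i),
          p ^ (n l - Nat.min (n q.1) (n l)) * x q.1 l q.2 b * (σ q.1 q.2).val : ℕ)) :
          ZMod (p ^ n l)) = 0) := by
    intro σ
    rw [hβgen σ]
    refine forall_congr' fun l => forall_congr' fun b => ?_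
    rw [← hbridge σ l b, ← hζ.pow_eq_one_iff_dvd, ← hβval σ l b, div_eq_one]
  -- center membership via commuting with basis
  have hbasis_comm : ∀ z : A, (∀ τ, u τ * z = z * u τ) → z ∈ Subring.center A := by
    intro z hz
    rw [Subring.mem_center_iff]
    intro g
    have hg : g = ∑ σ, u.equivFun g σ • u σ := (u.sum_equivFun g).symm
    calc g * z = (∑ σ, u.equivFun g σ • u σ) * z := by rw [← hg]
      _ = ∑ σ, u.equivFun g σ • (u σ * z) := by
          rw [Finset.sum_mul]
          exact Finset.sum_congr rfl fun σ _ => smul_mul_assoc _ _ _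
      _ = ∑ σ, u.equivFun g σ • (z * u σ) := by
          exact Finset.sum_congr rfl fun σ _ => by rw [hz σ]
      _ = z * (∑ σ, u.equivFun g σ • u σ) := by
          rw [Finset.mul_sum]
          exact Finset.sum_congr rfl fun σ _ => (mul_smul_comm _ _ _).symm
      _ = z * g := by rw [← hg]
  -- coordinates of central elements
  have hcentral : ∀ z : A, z ∈ Subring.center A →
      ∀ τ σ, u.equivFun z σ * ((φ σ τ : Rˣ) : R) = u.equivFun z σ * ((φ τ σ : Rˣ) : R) := by
    intro z hz τ σ
    have hc := Subring.mem_center_iff.mp hz (u τ)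
    have hzdec : z = ∑ σ, u.equivFun z σ • u σ := (u.sum_equivFun z).symm
    have h1 : z * u τ = u.equivFun.symm
        (fun δ => u.equivFun z (δ - τ) * ((φ (δ - τ) τ : Rˣ) : R)) := by
      rw [Module.Basis.equivFun_symm_apply]
      conv_lhs => rw [hzdec]
      rw [Finset.sum_mul]
      apply Fintype.sum_equiv (Equiv.addRight τ)
      intro σ'
      show (u.equivFun z σ' • u σ') * u τ = _
      rw [smul_mul_assoc, hmul]
      show _ = (u.equivFun z (σ' + τ - τ) * ((φ (σ' + τ - τ) τ : Rˣ) : R)) • u (σ' + τ)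
      rw [add_sub_cancel_right, smul_smul]
    have h2 : u τ * z = u.equivFun.symm
        (fun δ => u.equivFun z (δ - τ) * ((φ τ (δ - τ) : Rˣ) : R)) := by
      rw [Module.Basis.equivFun_symm_apply]
      conv_lhs => rw [hzdec]
      rw [Finset.mul_sum]
      apply Fintype.sum_equiv (Equiv.addRight τ)
      intro σ'
      show u τ * (u.equivFun z σ' • u σ') = _
      rw [mul_smul_comm, hmul]
      show _ = (u.equivFun z (σ' + τ - τ) * ((φ τ (σ' + τ - τ) : Rˣ) : R)) • u (σ' + τ)
      rw [add_sub_cancel_right, smul_smul, add_comm τ σ']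
    have h3 := hc
    rw [h1, h2] at h3
    have h4 := u.equivFun.symm.injective h3
    have h5 := congrFun h4 (σ + τ)
    rw [add_sub_cancel_right] at h5
    exact h5.symm
  -- main equivalence
  constructor
  · intro hcenter
    by_contra hnot
    obtain ⟨σ, hσne, hσeq⟩ := aux13_heart_mp hp hpos hstrict x hnot
    have hcomm : ∀ τ, φ σ τ = φ τ σ := (hrad σ).mpr hσeq
    have hcent : u σ ∈ Subring.center A := by
      apply hbasis_comm
      intro τ
      rw [hmul, hmul, hcomm τ, add_comm]
    have hmem : u σ ∈ Set.range (fun r : R => r • u 0) := by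
      rw [← hcenter]
      exact hcent
    obtain ⟨r, hr⟩ := hmem
    have h1 := congrFun (congrArg u.equivFun hr) σ
    rw [map_smul] at h1
    have h2 : u.equivFun (u (0 : ∀ i : Fin k, Fin (m i) → ZMod (p ^ n i))) σ = 0 := by
      rw [Module.Basis.equivFun_self, if_neg (Ne.symm hσne)]
    have h3 : u.equivFun (u σ) σ = 1 := by
      rw [Module.Basis.equivFun_self, if_pos rfl]
    rw [h3] at h1
    rw [Pi.smul_apply, h2, smul_zero] at h1
    exact one_ne_zero h1.symm
  · intro hunit
    apply Set.eq_of_subset_of_subset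
    · intro z hz
      have hz' : z ∈ Subring.center A := hz
      have hz0 : ∀ σ, σ ≠ 0 → u.equivFun z σ = 0 := by
        intro σ hσ
        by_contra hcne
        have hall : ∀ τ, φ σ τ = φ τ σ := by
          intro τ
          exact Units.ext (mul_left_cancel₀ hcne (hcentral z hz' τ σ))
        exact hσ (aux13_heart_mpr hp hpos hstrict x hunit σ ((hrad σ).mp hall))
      refine ⟨u.equivFun z 0, ?_⟩
      have hzdec : z = ∑ σ, u.equivFun z σ • u σ := (u.sum_equivFun z).symm
      show u.equivFun z 0 • u 0 = z
      conv_rhs => rw [hzdec]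
      rw [Fintype.sum_eq_single (0 : ∀ i : Fin k, Fin (m i) → ZMod (p ^ n i))]
      intro σ hσ
      rw [hz0 σ hσ, zero_smul]
    · rintro z ⟨r, rfl⟩
      show r • u 0 ∈ Subring.center A
      apply hbasis_comm
      intro τ
      rw [mul_smul_comm, smul_mul_assoc, hmul, hmul, zero_add, add_zero,
        hφz.1 τ, hφz.2 τ]
end

section
/- Over Z/p^nZ, a square matrix M is invertible if and only if its reduction M̄ mod p is invertible over the field F_p. Consequently, for the block matrix à over Z/p^{n₁}Z with blocks p^{n₁-min(n_i,n_j)}A_{ij} (n₁ > n₂ > … > n_k), the solution set of Ãx = 0 is exactly ∏_i (p^{n_i}Z/p^{n₁}Z)^{m_i} if and only if each A_{ii} is invertible mod p. -/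
section Helpers

lemma nmin_eq_l {a b : ℕ} (h : a ≤ b) : Nat.min a b = a := by unfold Nat.min; omega
lemma nmin_eq_r {a b : ℕ} (h : b ≤ a) : Nat.min a b = b := by unfold Nat.min; omega
lemma nmin_le_l (a b : ℕ) : Nat.min a b ≤ a := by unfold Nat.min; omega
lemma nmin_le_r (a b : ℕ) : Nat.min a b ≤ b := by unfold Nat.min; omega
lemma nmin_self (a : ℕ) : Nat.min a a = a := by unfold Nat.min; omega

variable {p : ℕ}

lemma elem_unit_iff (hp : p.Prime) {N : ℕ} (hN : N ≠ 0) (z : ZMod (p^N)) :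
    IsUnit z ↔ IsUnit (ZMod.castHom (dvd_pow_self p hN) (ZMod p) z) := by
  haveI : Fact p.Prime := ⟨hp⟩
  haveI : NeZero (p^N) := ⟨pow_ne_zero _ hp.ne_zero⟩
  have h1 : z = ((z.val : ℕ) : ZMod (p^N)) := by
    rw [ZMod.natCast_val, ZMod.cast_id]
  have h2 : ZMod.castHom (dvd_pow_self p hN) (ZMod p) z = ((z.val : ℕ) : ZMod p) := by
    rw [ZMod.castHom_apply, ZMod.natCast_val]
  rw [h2, ZMod.isUnit_iff_coprime]
  conv_lhs => rw [h1]
  rw [ZMod.isUnit_iff_coprime]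
  exact Nat.coprime_pow_right_iff (Nat.pos_of_ne_zero hN) _ _

lemma pow_base_zero (hp : p.Prime) (N : ℕ) : (p : ZMod (p^N))^N = 0 := by
  have : ((p^N : ℕ) : ZMod (p^N)) = 0 := ZMod.natCast_self _
  push_cast at this; exact this

lemma dvd_of_pow_mul_eq_zero (hp : p.Prime) {N a : ℕ} (ha : a ≤ N) {z : ZMod (p^N)}
    (h : (p : ZMod (p^N))^a * z = 0) : ∃ w, z = (p : ZMod (p^N))^(N-a) * w := by
  haveI : NeZero (p^N) := ⟨pow_ne_zero _ hp.ne_zero⟩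
  have h1 : z = ((z.val : ℕ) : ZMod (p^N)) := by rw [ZMod.natCast_val, ZMod.cast_id]
  rw [h1] at h
  have h2 : ((p^a * z.val : ℕ) : ZMod (p^N)) = 0 := by push_cast; exact h
  rw [ZMod.natCast_eq_zero_iff] at h2
  have h3 : p^(N-a) ∣ z.val := by
    rcases h2 with ⟨c, hc⟩
    have hpa : 0 < p^a := pow_pos hp.pos _
    refine ⟨c, ?_⟩
    have : p^a * (p^(N-a) * c) = p^a * z.val := by
      rw [← mul_assoc, ← pow_add, Nat.add_sub_cancel' ha, ← hc]
    exact (Nat.eq_of_mul_eq_mul_left hpa this.symm)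
  rcases h3 with ⟨w, hw⟩
  exact ⟨(w : ZMod (p^N)), by rw [h1, hw]; push_cast; try ring⟩

lemma castp_eq_zero_iff (hp : p.Prime) {N : ℕ} (hN : N ≠ 0) (z : ZMod (p^N)) :
    ZMod.castHom (dvd_pow_self p hN) (ZMod p) z = 0 ↔ ∃ w, z = (p : ZMod (p^N)) * w := by
  haveI : NeZero (p^N) := ⟨pow_ne_zero _ hp.ne_zero⟩
  constructor
  · intro h
    rw [ZMod.castHom_apply, ← ZMod.natCast_val, ZMod.natCast_eq_zero_iff] at h
    rcases h with ⟨w, hw⟩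
    refine ⟨(w : ZMod (p^N)), ?_⟩
    have h1 : z = ((z.val : ℕ) : ZMod (p^N)) := by rw [ZMod.natCast_val, ZMod.cast_id]
    rw [h1, hw]; push_cast; try ring
  · rintro ⟨w, rfl⟩
    rw [map_mul, map_natCast, ZMod.natCast_self, zero_mul]

lemma cast_cast_comm (hp : p.Prime) {N q : ℕ} (hN : N ≠ 0) [NeZero q] (hq : p ∣ q)
    (hqd : q ∣ p^N) (a : ZMod q) :
    ZMod.castHom (dvd_pow_self p hN) (ZMod p) (ZMod.cast a : ZMod (p^N)) =
      ZMod.castHom hq (ZMod p) a := by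
  rw [← ZMod.natCast_val a, map_natCast, ZMod.castHom_apply, ZMod.natCast_val]

lemma mulVec_eq_zero_of_isUnit {R : Type*} [CommRing R] {s : ℕ}
    {M : Matrix (Fin s) (Fin s) R} (hM : IsUnit M) {v : Fin s → R}
    (h : M.mulVec v = 0) : v = 0 := by
  rcases hM with ⟨u, rfl⟩
  have := congrArg (fun w => Matrix.mulVec (↑u⁻¹ : Matrix (Fin s) (Fin s) R) w) h
  simpa [Matrix.mulVec_mulVec] using this

lemma exists_ker_vec (hp : p.Prime) {s : ℕ} {M : Matrix (Fin s) (Fin s) (ZMod p)}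
    (hM : ¬ IsUnit M) : ∃ v : Fin s → ZMod p, v ≠ 0 ∧ M.mulVec v = 0 := by
  haveI : Fact p.Prime := ⟨hp⟩
  have hdet : M.det = 0 := by
    by_contra hd
    exact hM ((Matrix.isUnit_iff_isUnit_det M).2 (isUnit_iff_ne_zero.2 hd))
  rcases (Matrix.exists_mulVec_eq_zero_iff).2 hdet with ⟨v, hv0, hv⟩
  exact ⟨v, hv0, hv⟩

lemma matrix_unit_iff (hp : p.Prime) (s N : ℕ) (hN : N ≠ 0)
    (M : Matrix (Fin s) (Fin s) (ZMod (p^N))) :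
    IsUnit M ↔ IsUnit (M.map (ZMod.castHom (dvd_pow_self p hN) (ZMod p))) := by
  rw [Matrix.isUnit_iff_isUnit_det, Matrix.isUnit_iff_isUnit_det]
  have hd := RingHom.map_det (ZMod.castHom (dvd_pow_self p hN) (ZMod p)) M
  rw [show (M.map (ZMod.castHom (dvd_pow_self p hN) (ZMod p)))
      = (ZMod.castHom (dvd_pow_self p hN) (ZMod p)).mapMatrix M from rfl, ← hd]
  exact elem_unit_iff hp hN M.det

lemma mul_pow_pow_zero (hp : p.Prime) {N a b : ℕ} (h : N ≤ a + b) (c d : ZMod (p^N)) :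
    ((p : ZMod (p^N))^a * c) * ((p : ZMod (p^N))^b * d) = 0 := by
  have h1 : (p : ZMod (p^N))^a * (p : ZMod (p^N))^b = 0 := by
    rw [← pow_add, ← Nat.sub_add_cancel h, pow_add, pow_base_zero hp, mul_zero]
  calc ((p : ZMod (p^N))^a * c) * ((p : ZMod (p^N))^b * d)
      = ((p : ZMod (p^N))^a * (p : ZMod (p^N))^b) * (c * d) := by ring
    _ = 0 := by rw [h1, zero_mul]

end Helpers

section Aux

variable {p : ℕ} {k : ℕ}

/-- Easy inclusion: vectors in the product are solutions. -/
lemma easy_incl (hp : p.Prime) {n0 : ℕ} {n m : Fin k → ℕ}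
    (hle : ∀ i, n i ≤ n0)
    {A : (i : Fin k) → (j : Fin k) →
      Matrix (Fin (m i)) (Fin (m j)) (ZMod (p ^ Nat.min (n i) (n j)))}
    {Atil : Matrix ((i : Fin k) × Fin (m i)) ((i : Fin k) × Fin (m i)) (ZMod (p^n0))}
    (hA : ∀ (i j : Fin k) (a : Fin (m i)) (b : Fin (m j)),
      Atil ⟨i, a⟩ ⟨j, b⟩
        = (p : ZMod (p^n0)) ^ (n0 - Nat.min (n i) (n j)) *
          (ZMod.cast (A i j a b) : ZMod (p^n0)))
    (x : ((i : Fin k) × Fin (m i)) → ZMod (p^n0))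
    (hx : ∀ (i : Fin k) (a : Fin (m i)), ∃ y, x ⟨i, a⟩ = (p : ZMod (p^n0)) ^ n i * y) :
    Atil.mulVec x = 0 := by
  funext s
  obtain ⟨i, a⟩ := s
  show (Atil.mulVec x) ⟨i, a⟩ = 0
  rw [Matrix.mulVec, dotProduct, ← Finset.univ_sigma_univ, Finset.sum_sigma]
  apply Finset.sum_eq_zero
  intro l _
  apply Finset.sum_eq_zero
  intro b _
  obtain ⟨y, hy⟩ := hx l b
  rw [hA, hy]
  apply mul_pow_pow_zero hp
  have h2 := hle l
  rcases Nat.le_total (n i) (n l) with hm | hm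
  · rw [nmin_eq_l hm]; omega
  · rw [nmin_eq_r hm]; omega

/-- Hard inclusion: assuming all diagonal blocks are invertible mod p,
solutions lie in the product. -/
lemma hard_incl (hp : p.Prime) {n0 : ℕ} (hn0 : n0 ≠ 0) {n m : Fin k → ℕ}
    (hpos : ∀ i, 1 ≤ n i) (hle : ∀ i, n i ≤ n0)
    (hstrict : ∀ i j : Fin k, i < j → n j < n i)
    (hmn : ∀ i j : Fin k, Nat.min (n i) (n j) ≠ 0)
    {A : (i : Fin k) → (j : Fin k) →
      Matrix (Fin (m i)) (Fin (m j)) (ZMod (p ^ Nat.min (n i) (n j)))}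
    {Atil : Matrix ((i : Fin k) × Fin (m i)) ((i : Fin k) × Fin (m i)) (ZMod (p^n0))}
    (hA : ∀ (i j : Fin k) (a : Fin (m i)) (b : Fin (m j)),
      Atil ⟨i, a⟩ ⟨j, b⟩
        = (p : ZMod (p^n0)) ^ (n0 - Nat.min (n i) (n j)) *
          (ZMod.cast (A i j a b) : ZMod (p^n0)))
    (hunit : ∀ i : Fin k,
      IsUnit ((A i i).map (ZMod.castHom (dvd_pow_self p (hmn i i)) (ZMod p))))
    (x : ((i : Fin k) × Fin (m i)) → ZMod (p^n0))
    (hsol : Atil.mulVec x = 0) :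
    ∀ (i : Fin k) (a : Fin (m i)), ∃ y, x ⟨i, a⟩ = (p : ZMod (p^n0)) ^ n i * y := by
  haveI : Fact p.Prime := ⟨hp⟩
  haveI : NeZero p := ⟨hp.ne_zero⟩
  have key : ∀ t : ℕ, ∀ (i : Fin k) (a : Fin (m i)),
      ∃ y, x ⟨i, a⟩ = (p : ZMod (p^n0)) ^ (Nat.min t (n i)) * y := by
    intro t
    induction t with
    | zero =>
      intro i a
      exact ⟨x ⟨i, a⟩, by rw [nmin_eq_l (Nat.zero_le _), pow_zero, one_mul]⟩
    | succ t ih =>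
      have inner : ∀ c : ℕ, ∀ i : Fin k, i.val < c → ∀ a : Fin (m i),
          ∃ y, x ⟨i, a⟩ = (p : ZMod (p^n0)) ^ (Nat.min (t+1) (n i)) * y := by
        intro c
        induction c with
        | zero => intro i hi; exact absurd hi (Nat.not_lt_zero _)
        | succ c ihc =>
          intro i hi a
          by_cases hic : i.val < c
          · exact ihc i hic a
          -- now i.val = c
          by_cases htn : n i ≤ t
          · obtain ⟨y, hy⟩ := ih i a
            rw [nmin_eq_r htn] at hy
            exact ⟨y, by rw [nmin_eq_r (by omega : n i ≤ t + 1)]; exact hy⟩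
          push_neg at htn  -- t < n i
          set e : Fin k → ℕ := fun l => if l < i then Nat.min (t+1) (n l) else Nat.min t (n l)
            with he
          have hy0 : ∀ (l : Fin k) (b : Fin (m l)),
              ∃ yy, x ⟨l, b⟩ = (p : ZMod (p^n0)) ^ (e l) * yy := by
            intro l b
            by_cases hl : l < i
            · have := ihc l (by omega : l.val < c) b
              simpa only [he, if_pos hl] using this
            · have := ih l b
              simpa only [he, if_neg hl] using this
          choose y hy using hy0
          set c0 : ℕ := n0 - n i + t with hc0
          have hEl : ∀ l : Fin k, l ≠ i →
              c0 + 1 ≤ n0 - Nat.min (n i) (n l) + e l := by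
            intro l hl
            rcases lt_or_gt_of_ne hl with h | h
            · have hnl : n i < n l := hstrict l i h
              have hel : e l = t + 1 := by
                simp only [he, if_pos h]
                exact nmin_eq_l (by omega)
              rw [hel, nmin_eq_l (le_of_lt hnl)]
              have := hle i; omega
            · have hnl : n l < n i := hstrict i l h
              have hnot : ¬ (l < i) := not_lt_of_gt h
              have hel : e l = Nat.min t (n l) := by simp only [he, if_neg hnot]
              rw [hel, nmin_eq_r (le_of_lt hnl)]
              have h1 := hle l
              have h3 := hle i
              rcases Nat.le_total (n l) t with h2 | h2
              · rw [nmin_eq_r h2]; omega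
              · rw [nmin_eq_l h2]; omega
          set T : Fin (m i) → Fin k → ZMod (p^n0) := fun aa l =>
            ∑ b, (ZMod.cast (A i l aa b) : ZMod (p^n0)) * y l b with hT
          have hrow : ∀ aa : Fin (m i),
              ∑ l : Fin k, (p : ZMod (p^n0)) ^ (n0 - Nat.min (n i) (n l) + e l) * T aa l
                = 0 := by
            intro aa
            have h00 := congrFun hsol ⟨i, aa⟩
            rw [Matrix.mulVec, dotProduct, ← Finset.univ_sigma_univ,
              Finset.sum_sigma] at h00
            refine Eq.trans (Finset.sum_congr rfl ?_) h00
            intro l _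
            simp only [hT]
            rw [Finset.mul_sum]
            refine Finset.sum_congr rfl ?_
            intro b _
            rw [hA i l aa b, hy l b, pow_add]
            ring
          set G : Fin (m i) → ZMod (p^n0) := fun aa =>
            ∑ l ∈ Finset.univ.erase i,
              (p : ZMod (p^n0)) ^ (n0 - Nat.min (n i) (n l) + e l - (c0 + 1)) * T aa l
            with hG
          have hdiag : ∀ aa : Fin (m i),
              (p : ZMod (p^n0)) ^ c0 * (T aa i + (p : ZMod (p^n0)) * G aa) = 0 := by
            intro aa
            have hsplit := Finset.add_sum_erase Finset.univ
              (fun l => (p : ZMod (p^n0)) ^ (n0 - Nat.min (n i) (n l) + e l) * T aa l)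
              (Finset.mem_univ i)
            have hEi : n0 - Nat.min (n i) (n i) + e i = c0 := by
              rw [nmin_self]
              simp only [he, lt_self_iff_false, if_false]
              rw [nmin_eq_l (le_of_lt htn)]
            have herase : ∑ l ∈ Finset.univ.erase i,
                (p : ZMod (p^n0)) ^ (n0 - Nat.min (n i) (n l) + e l) * T aa l
                = (p : ZMod (p^n0)) ^ (c0 + 1) * G aa := by
              simp only [hG]
              rw [Finset.mul_sum]
              refine Finset.sum_congr rfl ?_
              intro l hl
              have hl' : l ≠ i := Finset.ne_of_mem_erase hl
              have hE := hEl l hl'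
              rw [← mul_assoc, ← pow_add, Nat.add_sub_cancel' hE]
            have h1 := hrow aa
            rw [← hsplit] at h1
            simp only [hEi] at h1
            rw [herase] at h1
            rw [show (p : ZMod (p^n0)) ^ c0 * (T aa i + (p : ZMod (p^n0)) * G aa)
              = (p : ZMod (p^n0)) ^ c0 * T aa i
                + (p : ZMod (p^n0)) ^ (c0 + 1) * G aa by ring]
            exact h1
          have hTdvd : ∀ aa : Fin (m i), ∃ w, T aa i = (p : ZMod (p^n0)) * w := by
            intro aa
            have hc0le : c0 ≤ n0 := by have := hle i; omega
            obtain ⟨w, hw⟩ := dvd_of_pow_mul_eq_zero hp hc0le (hdiag aa)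
            have hge : 1 ≤ n0 - c0 := by have := hle i; omega
            have hpow : (p : ZMod (p^n0)) ^ (n0 - c0)
                = (p : ZMod (p^n0)) * (p : ZMod (p^n0)) ^ (n0 - c0 - 1) := by
              conv_lhs => rw [show n0 - c0 = 1 + (n0 - c0 - 1) by omega]
              rw [pow_add, pow_one]
            refine ⟨(p : ZMod (p^n0)) ^ (n0 - c0 - 1) * w - G aa, ?_⟩
            have hTi : T aa i = (p : ZMod (p^n0)) ^ (n0 - c0) * w
                - (p : ZMod (p^n0)) * G aa := by
              rw [← hw]; ring
            rw [hTi, hpow]; ring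
          set ybar : Fin (m i) → ZMod p := fun b =>
            ZMod.castHom (dvd_pow_self p hn0) (ZMod p) (y i b) with hybar
          have hker : ((A i i).map
              (ZMod.castHom (dvd_pow_self p (hmn i i)) (ZMod p))).mulVec ybar = 0 := by
            funext aa
            show ∑ b, ((A i i).map
              (ZMod.castHom (dvd_pow_self p (hmn i i)) (ZMod p))) aa b * ybar b = 0
            obtain ⟨w, hw⟩ := hTdvd aa
            have hcast : ZMod.castHom (dvd_pow_self p hn0) (ZMod p) (T aa i) = 0 := by
              rw [hw, map_mul, map_natCast, ZMod.natCast_self, zero_mul]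
            simp only [hT] at hcast
            rw [map_sum] at hcast
            refine Eq.trans ?_ hcast
            refine Finset.sum_congr rfl ?_
            intro b _
            rw [map_mul, Matrix.map_apply]
            haveI : NeZero (p ^ Nat.min (n i) (n i)) := ⟨pow_ne_zero _ hp.ne_zero⟩
            congr 1
            exact (cast_cast_comm hp hn0 (dvd_pow_self p (hmn i i))
              (pow_dvd_pow p (le_trans (nmin_le_l _ _) (hle i))) (A i i aa b)).symm
          have hybar0 : ybar = 0 := mulVec_eq_zero_of_isUnit (hunit i) hker
          have hyb : ∀ b : Fin (m i), ∃ w, y i b = (p : ZMod (p^n0)) * w := by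
            intro b
            have hzb : ZMod.castHom (dvd_pow_self p hn0) (ZMod p) (y i b) = 0 := by
              have := congrFun hybar0 b
              simpa only [hybar, Pi.zero_apply] using this
            exact (castp_eq_zero_iff hp hn0 _).1 hzb
          obtain ⟨w, hw⟩ := hyb a
          refine ⟨w, ?_⟩
          have hei : e i = t := by
            simp only [he, lt_self_iff_false, if_false]
            exact nmin_eq_l (le_of_lt htn)
          rw [hy i a, hei, hw, nmin_eq_l (by omega : t + 1 ≤ n i), pow_succ]
          ring
      exact fun i a => inner k i i.isLt a
  intro i a
  obtain ⟨y, hy⟩ := key n0 i a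
  rw [nmin_eq_r (hle i)] at hy
  exact ⟨y, hy⟩

lemma conv_lemma (hp : p.Prime) {n0 : ℕ} (hn0 : n0 ≠ 0) {n m : Fin k → ℕ}
    (hpos : ∀ i, 1 ≤ n i) (hle : ∀ i, n i ≤ n0)
    (hstrict : ∀ i j : Fin k, i < j → n j < n i)
    (hmn : ∀ i j : Fin k, Nat.min (n i) (n j) ≠ 0)
    {A : (i : Fin k) → (j : Fin k) →
      Matrix (Fin (m i)) (Fin (m j)) (ZMod (p ^ Nat.min (n i) (n j)))}
    {Atil : Matrix ((i : Fin k) × Fin (m i)) ((i : Fin k) × Fin (m i)) (ZMod (p^n0))}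
    (hA : ∀ (i j : Fin k) (a : Fin (m i)) (b : Fin (m j)),
      Atil ⟨i, a⟩ ⟨j, b⟩
        = (p : ZMod (p^n0)) ^ (n0 - Nat.min (n i) (n j)) *
          (ZMod.cast (A i j a b) : ZMod (p^n0)))
    (hchar : ∀ x : ((i : Fin k) × Fin (m i)) → ZMod (p^n0),
      Atil.mulVec x = 0 ↔
        ∀ (i : Fin k) (a : Fin (m i)), ∃ y, x ⟨i, a⟩ = (p : ZMod (p^n0)) ^ n i * y) :
    ∀ i : Fin k,
      IsUnit ((A i i).map (ZMod.castHom (dvd_pow_self p (hmn i i)) (ZMod p))) := by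
  haveI : Fact p.Prime := ⟨hp⟩
  haveI : NeZero p := ⟨hp.ne_zero⟩
  classical
  by_contra hnot
  push_neg at hnot
  obtain ⟨i0, hbad0⟩ := hnot
  set B : (i : Fin k) → (j : Fin k) → Matrix (Fin (m i)) (Fin (m j)) (ZMod p) :=
    fun i j => (A i j).map (ZMod.castHom (dvd_pow_self p (hmn i j)) (ZMod p)) with hB
  set S : Finset (Fin k) := Finset.univ.filter (fun j => ¬ IsUnit (B j j)) with hSdef
  have hS : S.Nonempty := ⟨i0, by simp [hSdef, hB, hbad0]⟩
  set i := S.min' hS with hidef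
  have hibad : ¬ IsUnit (B i i) := by
    exact (Finset.mem_filter.1 (S.min'_mem hS)).2
  have hminu : ∀ j : Fin k, j < i → IsUnit (B j j) := by
    intro j hj
    by_contra hj'
    have h2 : i ≤ j := S.min'_le j (by simp [hSdef, hj'])
    exact absurd hj (not_lt_of_ge h2)
  obtain ⟨v, hv0, hv⟩ := exists_ker_vec hp hibad
  have step : ∀ d : ℕ, ∃ u : (l : Fin k) → Fin (m l) → ZMod p,
      u i = v ∧ (∀ l : Fin k, i < l → u l = 0) ∧
      (∀ l : Fin k, l.val + d < i.val → u l = 0) ∧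
      (∀ j : Fin k, j ≤ i → i.val - j.val ≤ d →
        ∑ l ∈ Finset.Icc j i, (B j l).mulVec (u l) = 0) := by
    intro d
    induction d with
    | zero =>
      refine ⟨Function.update (fun l => (0 : Fin (m l) → ZMod p)) i v, ?_, ?_, ?_, ?_⟩
      · simp
      · intro l hl
        rw [Function.update_of_ne (ne_of_gt hl)]
      · intro l hl
        rw [Function.update_of_ne (Fin.ne_of_val_ne (by omega))]
      · intro j hj hd
        have hji : j = i := Fin.ext (by omega)
        subst hji
        rw [Finset.Icc_self, Finset.sum_singleton, Function.update_self]
        exact hv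
    | succ d ihd =>
      obtain ⟨u, hui, hugt, hult, heq⟩ := ihd
      by_cases hd1 : d + 1 ≤ i.val
      · set j0 : Fin k := ⟨i.val - (d+1), by omega⟩ with hj0
        have hj0i : j0 < i := by
          rw [Fin.lt_def]
          simp only [hj0]
          omega
        set w : Fin (m j0) → ZMod p :=
          - ((B j0 j0)⁻¹.mulVec
              (∑ l ∈ Finset.Ioc j0 i, (B j0 l).mulVec (u l))) with hwdef
        refine ⟨Function.update u j0 w, ?_, ?_, ?_, ?_⟩
        · rw [Function.update_of_ne (ne_of_gt hj0i)]
          exact hui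
        · intro l hl
          rw [Function.update_of_ne (ne_of_gt (lt_trans hj0i hl))]
          exact hugt l hl
        · intro l hl
          rw [Function.update_of_ne (Fin.ne_of_val_ne (by simp only [hj0]; omega))]
          exact hult l (by omega)
        · intro j hj hd'
          by_cases hjd : i.val - j.val ≤ d
          · have hstay : ∀ l ∈ Finset.Icc j i,
                (B j l).mulVec (Function.update u j0 w l) = (B j l).mulVec (u l) := by
              intro l hl
              rw [Finset.mem_Icc] at hl
              rw [Function.update_of_ne (Fin.ne_of_val_ne (by
                have := hl.1
                simp only [hj0]
                rw [Fin.le_def] at this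
                omega))]
            rw [Finset.sum_congr rfl hstay]
            exact heq j hj hjd
          · have hjj0 : j = j0 := Fin.ext (by
              simp only [hj0]
              rw [Fin.le_def] at hj
              omega)
            subst hjj0
            rw [Finset.Icc_eq_cons_Ioc (le_of_lt hj0i), Finset.sum_cons]
            have hstay : ∀ l ∈ Finset.Ioc j0 i,
                (B j0 l).mulVec (Function.update u j0 w l) = (B j0 l).mulVec (u l) := by
              intro l hl
              rw [Finset.mem_Ioc] at hl
              rw [Function.update_of_ne (ne_of_gt hl.1)]
            rw [Finset.sum_congr rfl hstay, Function.update_self, hwdef]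
            have hdet : IsUnit (B j0 j0).det :=
              (Matrix.isUnit_iff_isUnit_det _).1 (hminu j0 hj0i)
            rw [Matrix.mulVec_neg, Matrix.mulVec_mulVec, Matrix.mul_nonsing_inv _ hdet,
              Matrix.one_mulVec]
            exact neg_add_cancel _
      · refine ⟨u, hui, hugt, ?_, ?_⟩
        · intro l hl
          exact hult l (by omega)
        · intro j hj hd'
          exact heq j hj (by omega)
  obtain ⟨u, hui, hugt, _, heq⟩ := step k
  set x : ((i : Fin k) × Fin (m i)) → ZMod (p^n0) := fun s =>
    (p : ZMod (p^n0))^(n s.1 - 1) * ((u s.1 s.2).val : ZMod (p^n0)) with hx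
  have hxsol : Atil.mulVec x = 0 := by
    funext s
    obtain ⟨j, a⟩ := s
    show (Atil.mulVec x) ⟨j, a⟩ = 0
    rw [Matrix.mulVec, dotProduct, ← Finset.univ_sigma_univ, Finset.sum_sigma]
    have hzero : ∀ l ∈ (Finset.univ : Finset (Fin k)), l ∉ Finset.Icc j i →
        ∑ b, Atil ⟨j, a⟩ ⟨l, b⟩ * x ⟨l, b⟩ = 0 := by
      intro l _ hl
      rw [Finset.mem_Icc, not_and_or] at hl
      rcases hl with hl | hl
      · -- l < j : high power of p
        have hlj : l < j := lt_of_not_ge hl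
        have hnl : n j < n l := hstrict l j hlj
        apply Finset.sum_eq_zero
        intro b _
        rw [hA]
        simp only [hx]
        apply mul_pow_pow_zero hp
        rw [nmin_eq_l (le_of_lt hnl)]
        have h1 := hle l
        have h2 := hpos l
        omega
      · -- i < l : u l = 0
        have hil : i < l := lt_of_not_ge hl
        apply Finset.sum_eq_zero
        intro b _
        simp only [hx, hugt l hil, Pi.zero_apply, ZMod.val_zero, Nat.cast_zero, mul_zero]
    rw [← Finset.sum_subset (Finset.subset_univ (Finset.Icc j i)) hzero]
    by_cases hji : j ≤ i
    · -- main case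
      have hterm : ∀ l ∈ Finset.Icc j i, ∑ b, Atil ⟨j, a⟩ ⟨l, b⟩ * x ⟨l, b⟩
          = (p : ZMod (p^n0))^(n0 - 1) *
            (∑ b, (ZMod.cast (A j l a b) : ZMod (p^n0)) * ((u l b).val : ZMod (p^n0))) := by
        intro l hl
        rw [Finset.mem_Icc] at hl
        rw [Finset.mul_sum]
        refine Finset.sum_congr rfl ?_
        intro b _
        rw [hA]
        simp only [hx]
        have hminl : Nat.min (n j) (n l) = n l := by
          rcases eq_or_lt_of_le hl.1 with h | h
          · subst h; exact nmin_eq_r (le_refl _)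
          · exact nmin_eq_r (le_of_lt (hstrict j l h))
        have hexp2 : n0 - Nat.min (n j) (n l) = n0 - n l := by rw [hminl]
        rw [hexp2]
        have hexp : (n0 - n l) + (n l - 1) = n0 - 1 := by
          have h1 := hle l
          have h2 := hpos l
          omega
        calc (p : ZMod (p^n0))^(n0 - n l) * (ZMod.cast (A j l a b) : ZMod (p^n0)) *
              ((p : ZMod (p^n0))^(n l - 1) * ((u l b).val : ZMod (p^n0)))
            = (p : ZMod (p^n0))^((n0 - n l) + (n l - 1)) *
              ((ZMod.cast (A j l a b) : ZMod (p^n0)) * ((u l b).val : ZMod (p^n0))) := by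
              rw [pow_add]; ring
          _ = _ := by rw [hexp]
      rw [Finset.sum_congr rfl hterm, ← Finset.mul_sum]
      set TT : ZMod (p^n0) := ∑ l ∈ Finset.Icc j i,
        ∑ b, (ZMod.cast (A j l a b) : ZMod (p^n0)) * ((u l b).val : ZMod (p^n0)) with hTT
      have hcast : ZMod.castHom (dvd_pow_self p hn0) (ZMod p) TT = 0 := by
        rw [hTT, map_sum]
        have hper : ∀ l ∈ Finset.Icc j i,
            ZMod.castHom (dvd_pow_self p hn0) (ZMod p)
              (∑ b, (ZMod.cast (A j l a b) : ZMod (p^n0)) * ((u l b).val : ZMod (p^n0)))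
            = ((B j l).mulVec (u l)) a := by
          intro l hl
          rw [map_sum]
          refine Finset.sum_congr rfl ?_
          intro b _
          rw [map_mul, map_natCast]
          haveI : NeZero (p ^ Nat.min (n j) (n l)) := ⟨pow_ne_zero _ hp.ne_zero⟩
          rw [cast_cast_comm hp hn0 (dvd_pow_self p (hmn j l))
            (pow_dvd_pow p (le_trans (Nat.min_le_left _ _) (hle j))) (A j l a b)]
          rw [ZMod.natCast_val, ZMod.cast_id]
          rfl
        rw [Finset.sum_congr rfl hper]
        have := congrFun (heq j hji (le_trans (Nat.sub_le _ _) (le_of_lt i.isLt))) a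
        rw [Finset.sum_apply] at this
        simpa using this
      obtain ⟨w2, hw2⟩ := (castp_eq_zero_iff hp hn0 TT).1 hcast
      rw [hw2, ← mul_assoc, ← pow_succ, show n0 - 1 + 1 = n0 by omega,
        pow_base_zero hp, zero_mul]
    · -- Icc j i empty
      rw [Finset.Icc_eq_empty (by exact fun h => hji h), Finset.sum_empty]
  have hdiv := (hchar x).1 hxsol
  obtain ⟨b, hb⟩ := Function.ne_iff.1 hv0
  obtain ⟨yy, hyy⟩ := hdiv i b
  have hxib : x ⟨i, b⟩ = (p : ZMod (p^n0))^(n i - 1) * (((v b).val : ℕ) : ZMod (p^n0)) := by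
    simp only [hx, hui]
  rw [hxib] at hyy
  have hps : (p : ZMod (p^n0))^(n i) = (p : ZMod (p^n0))^(n i - 1) * (p : ZMod (p^n0)) := by
    conv_lhs => rw [show n i = (n i - 1) + 1 by have := hpos i; omega]
    rw [pow_succ]
  have heq2 : (p : ZMod (p^n0))^(n i - 1) *
      ((((v b).val : ℕ) : ZMod (p^n0)) - (p : ZMod (p^n0)) * yy) = 0 := by
    have : (p : ZMod (p^n0))^(n i - 1) * (((v b).val : ℕ) : ZMod (p^n0))
        - (p : ZMod (p^n0))^(n i) * yy = 0 := by
      rw [← hyy]; exact sub_self _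
    rw [hps] at this
    calc (p : ZMod (p^n0))^(n i - 1) *
        ((((v b).val : ℕ) : ZMod (p^n0)) - (p : ZMod (p^n0)) * yy)
        = (p : ZMod (p^n0))^(n i - 1) * (((v b).val : ℕ) : ZMod (p^n0))
          - (p : ZMod (p^n0))^(n i - 1) * (p : ZMod (p^n0)) * yy := by ring
      _ = 0 := this
  have hle2 : n i - 1 ≤ n0 := by have := hle i; omega
  obtain ⟨w2, hw2⟩ := dvd_of_pow_mul_eq_zero hp hle2 heq2
  have hvb : v b = 0 := by
    have hcast := congrArg (ZMod.castHom (dvd_pow_self p hn0) (ZMod p)) hw2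
    rw [map_sub, map_mul, map_mul, map_pow, map_natCast, map_natCast,
      ZMod.natCast_self, zero_mul,
      zero_pow (by have := hpos i; have := hle i; omega : n0 - (n i - 1) ≠ 0), zero_mul] at hcast
    rw [sub_zero] at hcast
    rw [ZMod.natCast_val, ZMod.cast_id] at hcast
    exact hcast
  exact hb hvb

end Aux

theorem stmt15 (p : ℕ) (hp : p.Prime) (k : ℕ) (hk : 0 < k)
    (n : Fin k → ℕ) (hpos : ∀ i, 1 ≤ n i)
    (hstrict : ∀ i j : Fin k, i < j → n j < n i)
    (m : Fin k → ℕ)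
    (A : (i : Fin k) → (j : Fin k) →
      Matrix (Fin (m i)) (Fin (m j)) (ZMod (p ^ Nat.min (n i) (n j))))
    (Atil : Matrix ((i : Fin k) × Fin (m i)) ((i : Fin k) × Fin (m i))
      (ZMod (p ^ n ⟨0, hk⟩)))
    (hA : ∀ (i j : Fin k) (a : Fin (m i)) (b : Fin (m j)),
      Atil ⟨i, a⟩ ⟨j, b⟩
        = (p : ZMod (p ^ n ⟨0, hk⟩)) ^ (n ⟨0, hk⟩ - Nat.min (n i) (n j)) *
          (ZMod.cast (A i j a b) : ZMod (p ^ n ⟨0, hk⟩))) :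
    (∀ (s N : ℕ) (hN : N ≠ 0) (M : Matrix (Fin s) (Fin s) (ZMod (p ^ N))),
      IsUnit M ↔ IsUnit (M.map (ZMod.castHom (dvd_pow_self p hN) (ZMod p)))) ∧
    ((∀ x : ((i : Fin k) × Fin (m i)) → ZMod (p ^ n ⟨0, hk⟩),
        Atil.mulVec x = 0 ↔
          ∀ (i : Fin k) (a : Fin (m i)),
            ∃ y, x ⟨i, a⟩ = (p : ZMod (p ^ n ⟨0, hk⟩)) ^ n i * y) ↔
      ∀ i : Fin k,
        IsUnit ((A i i).map (ZMod.castHom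
          (dvd_pow_self p (by have := hpos i; simp only [Nat.min_self]; omega : Nat.min (n i) (n i) ≠ 0))
          (ZMod p)))) := by
  haveI : Fact p.Prime := ⟨hp⟩
  have hn0 : n ⟨0, hk⟩ ≠ 0 := by have := hpos ⟨0, hk⟩; omega
  have hle : ∀ i, n i ≤ n ⟨0, hk⟩ := by
    intro i
    rcases Nat.eq_zero_or_pos i.val with h | h
    · have hi : i = ⟨0, hk⟩ := Fin.ext h
      rw [hi]
    · exact le_of_lt (hstrict ⟨0, hk⟩ i (by rw [Fin.lt_def]; exact h))
  have hmn : ∀ i j : Fin k, Nat.min (n i) (n j) ≠ 0 := by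
    intro i j
    have h1 := hpos i; have h2 := hpos j
    rcases Nat.le_total (n i) (n j) with h | h
    · rw [nmin_eq_l h]; omega
    · rw [nmin_eq_r h]; omega
  refine ⟨fun s N hN M => matrix_unit_iff hp s N hN M, ?_, ?_⟩
  · intro hchar
    exact conv_lemma hp hn0 hpos hle hstrict hmn hA hchar
  · intro hunit x
    exact ⟨fun hsol => hard_incl hp hn0 hpos hle hstrict hmn hA hunit x hsol,
      fun hx => easy_incl hp hle hA x hx⟩
end

section
/- Let G be a finite abelian group, R a commutative ring with only trivial idempotents, φ ∈ Z²(G,U(R)), and f_φ the associated pairing. The φ-regular elements G_reg = {σ : f_φ(σ,τ)=1 ∀τ} form a subgroup of G, and the restriction of φ to G_reg × G_reg makes R(G_reg)^φ a commutative subring of RG^φ contained in (and, when R is a domain, equal to) the center Z(RG^φ). -/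
theorem stmt17 (R : Type*) [CommRing R]
    (hidem : ∀ r : R, r * r = r → r = 0 ∨ r = 1)
    (G : Type*) [CommGroup G] [Fintype G]
    (φ : G → G → Rˣ)
    (hφ : ∀ a b c : G, φ b c * φ a (b * c) = φ a b * φ (a * b) c)
    (hφ1 : φ 1 1 = 1)
    (A : Type*) [Ring A] [Algebra R A] (u : Module.Basis G R A)
    (hmul : ∀ σ τ : G, u σ * u τ = ((φ σ τ : Rˣ) : R) • u (σ * τ))
    (Greg : Set G) (hGreg : Greg = {σ : G | ∀ τ : G, φ σ τ * (φ τ σ)⁻¹ = 1}) :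
    ((1 : G) ∈ Greg ∧ (∀ σ τ : G, σ ∈ Greg → τ ∈ Greg → σ * τ ∈ Greg) ∧
      (∀ σ : G, σ ∈ Greg → σ⁻¹ ∈ Greg)) ∧
    (∀ x ∈ Submodule.span R (u '' Greg), ∀ y ∈ Submodule.span R (u '' Greg),
      x * y = y * x) ∧
    (∀ x ∈ Submodule.span R (u '' Greg), x ∈ Subring.center A) ∧
    (IsDomain R → (Submodule.span R (u '' Greg) : Set A) = Subring.center A) := by
  subst hGreg
  -- φ(1,τ) = 1 and φ(τ,1) = 1
  have h1φ : ∀ τ : G, φ 1 τ = 1 := by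
    intro τ
    have h := hφ 1 1 τ
    simp only [one_mul] at h
    exact (mul_right_cancel h).trans hφ1
  have hφ1' : ∀ τ : G, φ τ 1 = 1 := by
    intro τ
    have h := hφ τ 1 1
    simp only [one_mul, mul_one] at h
    have h' : φ τ 1 * φ 1 1 = φ τ 1 * φ τ 1 := by rw [mul_comm]; exact h
    exact (mul_left_cancel h').symm.trans hφ1
  -- key multiplicative identity (bilinearity of f)
  have key : ∀ σ τ ρ : G, φ (σ * τ) ρ * (φ ρ σ * φ ρ τ) = φ ρ (σ * τ) * (φ σ ρ * φ τ ρ) := by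
    intro σ τ ρ
    have a := hφ σ τ ρ
    have b := hφ ρ σ τ
    have c := hφ σ ρ τ
    rw [mul_comm ρ σ] at b
    rw [mul_comm ρ τ] at c
    -- a : φ τ ρ * φ σ (τ*ρ) = φ σ τ * φ (σ*τ) ρ
    -- b : φ σ τ * φ ρ (σ*τ) = φ ρ σ * φ (σ*ρ) τ
    -- c : φ ρ τ * φ σ (τ*ρ) = φ σ ρ * φ (σ*ρ) τ
    have keyX : (φ (σ * τ) ρ * (φ ρ σ * φ ρ τ)) * (φ σ τ * φ σ (τ * ρ) * φ (σ * ρ) τ)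
        = (φ ρ (σ * τ) * (φ σ ρ * φ τ ρ)) * (φ σ τ * φ σ (τ * ρ) * φ (σ * ρ) τ) := by
      apply Units.ext
      have aR := congrArg (Units.val) a
      have bR := congrArg (Units.val) b
      have cR := congrArg (Units.val) c
      push_cast at aR bR cR ⊢
      linear_combination (-((φ ρ σ : R) * (φ ρ τ : R) * (φ σ (τ*ρ) : R) * (φ (σ*ρ) τ : R))) * aR
        + (-((φ σ ρ : R) * (φ τ ρ : R) * (φ σ (τ*ρ) : R) * (φ (σ*ρ) τ : R))) * bR
        + ((φ ρ σ : R) * (φ σ (τ*ρ) : R) * (φ (σ*ρ) τ : R) * (φ τ ρ : R)) * cR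
    exact mul_right_cancel keyX
  -- membership reformulation
  have hmem : ∀ σ : G, σ ∈ {σ : G | ∀ τ : G, φ σ τ * (φ τ σ)⁻¹ = 1} ↔ ∀ τ : G, φ σ τ = φ τ σ := by
    intro σ
    simp only [Set.mem_setOf_eq, mul_inv_eq_one]
  -- subgroup facts
  have sub1 : (1 : G) ∈ {σ : G | ∀ τ : G, φ σ τ * (φ τ σ)⁻¹ = 1} := by
    rw [hmem]; intro τ; rw [h1φ, hφ1']
  have submul : ∀ σ τ : G, σ ∈ {σ : G | ∀ τ : G, φ σ τ * (φ τ σ)⁻¹ = 1} →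
      τ ∈ {σ : G | ∀ τ : G, φ σ τ * (φ τ σ)⁻¹ = 1} →
      σ * τ ∈ {σ : G | ∀ τ : G, φ σ τ * (φ τ σ)⁻¹ = 1} := by
    intro σ τ hσ hτ
    rw [hmem] at hσ hτ ⊢
    intro ρ
    have k := key σ τ ρ
    rw [hσ ρ, hτ ρ] at k
    exact mul_right_cancel k
  have subinv : ∀ σ : G, σ ∈ {σ : G | ∀ τ : G, φ σ τ * (φ τ σ)⁻¹ = 1} →
      σ⁻¹ ∈ {σ : G | ∀ τ : G, φ σ τ * (φ τ σ)⁻¹ = 1} := by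
    intro σ hσ
    rw [hmem] at hσ ⊢
    intro ρ
    have k := key σ⁻¹ σ ρ
    rw [inv_mul_cancel, h1φ, hφ1', one_mul, one_mul, hσ ρ] at k
    exact (mul_right_cancel k).symm
  -- elements of Greg give central basis vectors
  have hcomm : ∀ σ : G, (∀ τ : G, φ σ τ = φ τ σ) → ∀ b : A, u σ * b = b * u σ := by
    intro σ hσ b
    have hLR : LinearMap.mulLeft R (u σ) = LinearMap.mulRight R (u σ) := by
      apply Module.Basis.ext u
      intro τ
      simp only [LinearMap.mulLeft_apply, LinearMap.mulRight_apply]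
      rw [hmul, hmul, hσ τ, mul_comm σ τ]
    simpa using DFunLike.congr_fun hLR b
  have hspan_center : Submodule.span R (u '' {σ : G | ∀ τ : G, φ σ τ * (φ τ σ)⁻¹ = 1})
      ≤ Subalgebra.toSubmodule (Subalgebra.center R A) := by
    rw [Submodule.span_le]
    rintro _ ⟨σ, hσ, rfl⟩
    simp only [SetLike.mem_coe, Subalgebra.mem_toSubmodule, Subalgebra.mem_center_iff]
    intro b
    exact (hcomm σ ((hmem σ).1 hσ) b).symm
  have part3 : ∀ x ∈ Submodule.span R (u '' {σ : G | ∀ τ : G, φ σ τ * (φ τ σ)⁻¹ = 1}),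
      x ∈ Subring.center A := by
    intro x hx
    have := hspan_center hx
    rw [Subalgebra.mem_toSubmodule, Subalgebra.mem_center_iff] at this
    exact Subring.mem_center_iff.2 this
  -- repr formulas
  have hreprL : ∀ (τ : G) (x : A) (σ : G),
      u.repr (u τ * x) (τ * σ) = (φ τ σ : R) * u.repr x σ := by
    intro τ x σ
    have hmap : (Finsupp.lapply (τ * σ) ∘ₗ (u.repr : A →ₗ[R] (G →₀ R)) ∘ₗ LinearMap.mulLeft R (u τ))
        = (φ τ σ : R) • (Finsupp.lapply σ ∘ₗ (u.repr : A →ₗ[R] (G →₀ R))) := by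
      apply Module.Basis.ext u
      intro g
      simp only [LinearMap.comp_apply, LinearMap.mulLeft_apply, LinearMap.smul_apply,
        Finsupp.lapply_apply, hmul, map_smul, Finsupp.smul_apply, Module.Basis.repr_self_apply,
        smul_eq_mul]
      by_cases h : g = σ
      · subst h; simp
      · have h2 : τ * g ≠ τ * σ := fun hh => h (mul_left_cancel hh)
        simp [Module.Basis.repr_self, Finsupp.single_apply, h, h2]
    simpa using DFunLike.congr_fun hmap x
  have hreprR : ∀ (τ : G) (x : A) (σ : G),
      u.repr (x * u τ) (σ * τ) = (φ σ τ : R) * u.repr x σ := by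
    intro τ x σ
    have hmap : (Finsupp.lapply (σ * τ) ∘ₗ (u.repr : A →ₗ[R] (G →₀ R)) ∘ₗ LinearMap.mulRight R (u τ))
        = (φ σ τ : R) • (Finsupp.lapply σ ∘ₗ (u.repr : A →ₗ[R] (G →₀ R))) := by
      apply Module.Basis.ext u
      intro g
      simp only [LinearMap.comp_apply, LinearMap.mulRight_apply, LinearMap.smul_apply,
        Finsupp.lapply_apply, hmul, map_smul, Finsupp.smul_apply, Module.Basis.repr_self_apply,
        smul_eq_mul]
      by_cases h : g = σ
      · subst h; simp
      · have h2 : g * τ ≠ σ * τ := fun hh => h (mul_right_cancel hh)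
        simp [Module.Basis.repr_self, Finsupp.single_apply, h, h2]
    simpa using DFunLike.congr_fun hmap x
  refine ⟨⟨sub1, submul, subinv⟩, ?_, part3, ?_⟩
  · intro x hx y hy
    exact (Subring.mem_center_iff.1 (part3 x hx) y).symm
  · intro hdom
    apply Set.eq_of_subset_of_subset
    · intro x hx
      exact part3 x hx
    · intro x hx
      rw [SetLike.mem_coe, Module.Basis.mem_span_image]
      intro σ hσ
      simp only [Finset.coe_sort_coe, Finsupp.mem_support_iff, Finset.mem_coe] at hσ
      by_contra hσG
      simp only [Set.mem_setOf_eq, not_forall, mul_inv_eq_one] at hσG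
      obtain ⟨τ, hτ⟩ := hσG
      have hc : u τ * x = x * u τ := Subring.mem_center_iff.1 hx (u τ)
      have h1 := hreprL τ x σ
      have h2 := hreprR τ x σ
      rw [hc, mul_comm τ σ, h2] at h1
      have hσ0 : u.repr x σ ≠ 0 := by
        intro h; exact hσ (by simpa [Finsupp.mem_support_iff] using h)
      have := mul_right_cancel₀ hσ0 h1
      exact hτ (Units.ext this)
end
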